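/- arXiv:math/0210069 — 5 statements merged into one kernel-verified Lean document; each statement's English description precedes it below -/
import Mathlib

section
/- If J ⊆ I are ideals of a commutative Noetherian ring R and there exists a nonnegative integer r with I^(r+1) = J·I^r, then J and I have the same integral closure; in particular every element of I is integral over J. -/
/-!
If `x` is integral over `I`, its equation puts `x ^ n` in `I * K ^ (n - 1)` for `K = I + (x)`,
so `I` is a reduction of `K`. Reductions compose, hence `J` is a reduction of `K`:
`x * K ^ m ⊆ K ^ (m + 1) = J * K ^ m`, and the determinant trick on the finitely generated
module `K ^ m` yields an equation of integral dependence of `x` over `J`.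
-/

open IsLocalRing Polynomial

section Defs
variable (R : Type*) [CommRing R]

/-- `J` is a reduction of `I`: `J ⊆ I` and `I^(r+1) = J·I^r` for some `r ≥ 0`. -/
def IsReduction (I J : Ideal R) : Prop :=
  J ≤ I ∧ ∃ r : ℕ, I ^ (r + 1) = J * I ^ r

/-- The core of an ideal: the intersection of all its reductions. -/
noncomputable def coreIdeal (I : Ideal R) : Ideal R :=
  sInf {J | IsReduction R I J}

/-- Minimal number of generators of an ideal. -/
noncomputable def mu (I : Ideal R) : ℕ :=
  sInf {n | ∃ s : Finset R, s.card = n ∧ Ideal.span (s : Set R) = I}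

/-- Length of a module, as the Krull dimension of its submodule lattice. -/
noncomputable def modLength (M : Type*) [AddCommGroup M] [Module R M] : WithBot ℕ∞ :=
  Order.krullDim (Submodule R M)

/-- Analytic spread: Krull dimension of the special fiber ring of the Rees algebra. -/
noncomputable def analyticSpread [IsLocalRing R] (I : Ideal R) : WithBot ℕ∞ :=
  ringKrullDim ((reesAlgebra I) ⧸ (Ideal.map (algebraMap R (reesAlgebra I)) (maximalIdeal R)))

/-- Height of an ideal: infimum of heights of primes containing it. -/
noncomputable def idealHeight (I : Ideal R) : ℕ∞ :=
  ⨅ p : {p : PrimeSpectrum R // I ≤ p.asIdeal}, Order.height p.1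

/-- γ(I): least number of minimal reductions whose intersection is the core. -/
noncomputable def gammaI (I : Ideal R) : ℕ :=
  sInf {t | ∃ J : Fin t → Ideal R,
    (∀ i, Minimal (IsReduction R I) (J i)) ∧ coreIdeal R I = ⨅ i, J i}

/-- `I` satisfies the condition `G_s`. -/
def SatisfiesGs (I : Ideal R) (s : ℕ) : Prop :=
  ∀ p : PrimeSpectrum R, I ≤ p.asIdeal → Order.height p < (s : ℕ∞) →
    (mu (Localization.AtPrime p.asIdeal)
      (I.map (algebraMap R (Localization.AtPrime p.asIdeal))) : ℕ∞) ≤ Order.height p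

/-- `K` is a geometric `i`-residual intersection of `I`. -/
def IsGeomResidualIntersection (I K : Ideal R) (i : ℕ) : Prop :=
  K ≠ ⊤ ∧ idealHeight R I ≤ (i : ℕ∞) ∧
  ∃ J : Ideal R, J ≤ I ∧ (∃ g : Fin i → R, J = Ideal.span (Set.range g)) ∧
    K = Submodule.colon J I ∧ (i : ℕ∞) ≤ idealHeight R K ∧
    ((i : ℕ∞) + 1) ≤ idealHeight R (I ⊔ K)

/-- depth of a local ring is at least `n`. -/
def HasDepthGE (A : Type*) [CommRing A] [IsLocalRing A] (n : ℕ) : Prop :=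
  ∃ rs : List A, rs.length = n ∧ (∀ x ∈ rs, x ∈ maximalIdeal A) ∧
    RingTheory.Sequence.IsRegular A rs

/-- Serre's condition `S₂` for a ring. -/
def SerreS2 (A : Type*) [CommRing A] : Prop :=
  ∀ p : PrimeSpectrum A, ∀ n : ℕ, (n : ℕ∞) ≤ min 2 (Order.height p) →
    HasDepthGE (Localization.AtPrime p.asIdeal) n

/-- `I` is weakly `s`-residually `S₂`. -/
def WeaklyResiduallyS2 (I : Ideal R) (s : ℕ) : Prop :=
  ∀ i : ℕ, i ≤ s → ∀ K : Ideal R, IsGeomResidualIntersection R I K i → SerreS2 (R ⧸ K)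

/-- A local ring is Cohen–Macaulay: its depth is at least its dimension. -/
def IsCMLocalRing (A : Type*) [CommRing A] [IsLocalRing A] : Prop :=
  ∀ n : ℕ, (n : WithBot ℕ∞) ≤ ringKrullDim A → HasDepthGE A n

end Defs

/-- `x` is integral over the ideal `J`. -/
def IsIntegralOverIdeal {R : Type*} [CommRing R] (J : Ideal R) (x : R) : Prop :=
  ∃ n : ℕ, 0 < n ∧ ∃ b : ℕ → R, (∀ j ∈ Finset.Icc 1 n, b j ∈ J ^ j) ∧
    x ^ n + ∑ j ∈ Finset.Icc 1 n, b j * x ^ (n - j) = 0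

section CommMonoid

variable {M : Type*} [CommMonoid M]

theorem pow_add_eq_pow_mul_pow_of_pow_succ_eq {k i : M} {s : ℕ} (h : k ^ (s + 1) = i * k ^ s)
    (t : ℕ) : k ^ (s + t) = i ^ t * k ^ s := by
  induction t with
  | zero => simp
  | succ t ih =>
    calc k ^ (s + (t + 1)) = k ^ (s + 1) * k ^ t := by rw [← pow_add, add_right_comm, add_assoc]
      _ = i * k ^ (s + t) := by rw [h, mul_assoc, ← pow_add]
      _ = i ^ (t + 1) * k ^ s := by rw [ih, ← mul_assoc, ← pow_succ']

theorem pow_succ_eq_mul_pow_trans {k i j : M} {r s : ℕ} (hk : k ^ (s + 1) = i * k ^ s)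
    (hi : i ^ (r + 1) = j * i ^ r) : k ^ (s + r + 1) = j * k ^ (s + r) := by
  rw [add_assoc, pow_add_eq_pow_mul_pow_of_pow_succ_eq hk, hi,
    pow_add_eq_pow_mul_pow_of_pow_succ_eq hk, mul_assoc]

end CommMonoid

theorem Ideal.sup_pow_succ_le {R : Type*} [CommSemiring R] (I L : Ideal R) (m : ℕ) :
    (I ⊔ L) ^ (m + 1) ≤ I * (I ⊔ L) ^ m ⊔ L ^ (m + 1) := by
  induction m with
  | zero => simp
  | succ m ih =>
    calc (I ⊔ L) ^ (m + 1 + 1) = I * (I ⊔ L) ^ (m + 1) ⊔ L * (I ⊔ L) ^ (m + 1) := by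
          rw [pow_succ' _ (m + 1), Ideal.sup_mul]
      _ ≤ I * (I ⊔ L) ^ (m + 1) ⊔ L * (I * (I ⊔ L) ^ m ⊔ L ^ (m + 1)) := by gcongr
      _ = I * (I ⊔ L) ^ (m + 1) ⊔ I * (L * (I ⊔ L) ^ m) ⊔ L ^ (m + 1 + 1) := by
          rw [Ideal.mul_sup, ← sup_assoc, mul_left_comm, ← pow_succ']
      _ ≤ I * (I ⊔ L) ^ (m + 1) ⊔ L ^ (m + 1 + 1) := by
          refine sup_le_sup_right (sup_le le_rfl (Ideal.mul_mono_right ?_)) _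
          rw [pow_succ' _ m]
          exact Ideal.mul_mono_left le_sup_right

theorem Polynomial.coeff_mul_X_pow_mem_pow {R : Type*} [CommSemiring R] {J : Ideal R} {p : R[X]}
    (hp : ∀ i, p.coeff i ∈ J ^ (p.natDegree - i)) (m i : ℕ) :
    (p * X ^ m).coeff i ∈ J ^ ((p * X ^ m).natDegree - i) := by
  rw [coeff_mul_X_pow']
  split_ifs with hmi
  · have hdeg : (p * X ^ m).natDegree ≤ p.natDegree + m :=
      natDegree_mul_le.trans (add_le_add le_rfl (natDegree_X_pow_le m))
    exact Ideal.pow_le_pow_right (by omega) (hp _)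
  · exact zero_mem _

namespace IsReduction

variable {R : Type*} [CommRing R] {I J K : Ideal R}

theorem trans (hKI : IsReduction R K I) (hIJ : IsReduction R I J) : IsReduction R K J := by
  obtain ⟨hIK, s, hs⟩ := hKI
  obtain ⟨hJI, r, hr⟩ := hIJ
  exact ⟨hJI.trans hIK, s + r, pow_succ_eq_mul_pow_trans hs hr⟩

end IsReduction

namespace IsIntegralOverIdeal

variable {R : Type*} [CommRing R] {I J : Ideal R} {x : R}

theorem of_mem (hx : x ∈ I) : IsIntegralOverIdeal I x :=
  ⟨1, one_pos, fun _ ↦ -x, by simpa using neg_mem hx, by simp⟩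

theorem mono (hJI : J ≤ I) (hx : IsIntegralOverIdeal J x) : IsIntegralOverIdeal I x := by
  obtain ⟨n, hn, b, hb, heq⟩ := hx
  exact ⟨n, hn, b, fun j hj ↦ Ideal.pow_right_mono hJI j (hb j hj), heq⟩

theorem of_monic {p : R[X]} (hp : p.Monic) (hcoeff : ∀ i, p.coeff i ∈ J ^ (p.natDegree - i))
    (hpx : p.eval x = 0) : IsIntegralOverIdeal J x := by
  rcases Nat.eq_zero_or_pos p.natDegree with hdeg | hdeg
  · have h10 : (1 : R) = 0 := by rwa [hp.natDegree_eq_zero.mp hdeg, eval_one] at hpx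
    have hx0 : x = 0 := by rw [← mul_one x, h10, mul_zero]
    exact ⟨1, one_pos, 0, fun _ _ ↦ zero_mem _, by simp [hx0]⟩
  refine ⟨p.natDegree, hdeg, fun j ↦ p.coeff (p.natDegree - j), fun j hj ↦ ?_, ?_⟩
  · have := hcoeff (p.natDegree - j)
    rwa [Nat.sub_sub_self (Finset.mem_Icc.mp hj).2] at this
  · rw [eval_eq_sum_range, Finset.sum_range_succ, hp.coeff_natDegree, one_mul] at hpx
    rw [← hpx, add_comm, ← Finset.Ico_add_one_right_eq_Icc,
      Finset.sum_Ico_reflect (fun i ↦ p.coeff i * x ^ i) 1 le_rfl]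
    simp

/-- The determinant trick, applied to multiplication by `x` on `K ^ m`. -/
theorem of_isReduction {K : Ideal R} (hK : K.FG) (hKJ : IsReduction R K J) (hx : x ∈ K) :
    IsIntegralOverIdeal J x := by
  obtain ⟨-, m, hm⟩ := hKJ
  have : Module.Finite R ↥(K ^ m) := Module.Finite.iff_fg.mpr hK.pow
  have hrange : LinearMap.range (algebraMap R (Module.End R ↥(K ^ m)) x) ≤ J • ⊤ := by
    rintro _ ⟨y, rfl⟩
    rw [Module.algebraMap_end_apply, Submodule.mem_smul_top_iff, Ideal.smul_eq_mul, ← hm,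
      pow_succ']
    exact Ideal.mul_mem_mul hx y.2
  obtain ⟨p, hp, -, hcoeff, hpx⟩ :=
    LinearMap.exists_monic_and_natDegree_eq_and_coeff_mem_pow_and_aeval_eq_zero R _ J hrange
  have hpxm : (p * X ^ m).eval x = 0 := by
    have := congrArg Subtype.val (LinearMap.congr_fun hpx ⟨x ^ m, Ideal.pow_mem_pow hx m⟩)
    simpa [aeval_algebraMap_apply] using this
  exact of_monic (hp.mul (monic_X_pow m)) (coeff_mul_X_pow_mem_pow hcoeff m) hpxm

theorem isReduction_sup_span_singleton (hx : IsIntegralOverIdeal I x) :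
    IsReduction R (I ⊔ Ideal.span {x}) I := by
  obtain ⟨n, hn, b, hb, heq⟩ := hx
  set K := I ⊔ Ideal.span {x}
  have hxK : x ∈ K := Ideal.mem_sup_right (Ideal.mem_span_singleton_self x)
  have hxn : x ^ n ∈ I * K ^ (n - 1) := by
    rw [eq_neg_of_add_eq_zero_left heq]
    refine neg_mem (Ideal.sum_mem _ fun j hj ↦ ?_)
    obtain ⟨hj1, hjn⟩ := Finset.mem_Icc.mp hj
    have hle : I ^ j * K ^ (n - j) ≤ I * K ^ (n - 1) :=
      calc I ^ j * K ^ (n - j) = I * (I ^ (j - 1) * K ^ (n - j)) := by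
            rw [← mul_assoc, ← pow_succ', Nat.sub_add_cancel hj1]
        _ ≤ I * (K ^ (j - 1) * K ^ (n - j)) := by gcongr; exact le_sup_left
        _ = I * K ^ (n - 1) := by rw [← pow_add]; congr 2; omega
    exact hle (Ideal.mul_mem_mul (hb j hj) (Ideal.pow_mem_pow hxK _))
  refine ⟨le_sup_left, n - 1, le_antisymm ?_ ?_⟩
  · calc K ^ (n - 1 + 1) ≤ I * K ^ (n - 1) ⊔ Ideal.span {x} ^ (n - 1 + 1) :=
          Ideal.sup_pow_succ_le _ _ _
      _ ≤ I * K ^ (n - 1) := by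
          rw [Ideal.span_singleton_pow, Nat.sub_add_cancel hn]
          exact sup_le le_rfl ((Ideal.span_singleton_le_iff_mem _).mpr hxn)
  · rw [pow_succ']
    exact Ideal.mul_mono_left le_sup_left

end IsIntegralOverIdeal

/-- If `J ⊆ I` and `I^(r+1) = J·I^r` then `J` and `I` have the same integral closure;
in particular every element of `I` is integral over `J`. -/
theorem stmt0 {R : Type*} [CommRing R] [IsNoetherianRing R] (I J : Ideal R)
    (hJI : J ≤ I) (r : ℕ) (h : I ^ (r + 1) = J * I ^ r) :
    {x | IsIntegralOverIdeal J x} = {x | IsIntegralOverIdeal I x} ∧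
      ∀ x ∈ I, IsIntegralOverIdeal J x := by
  have hIJ : IsReduction R I J := ⟨hJI, r, h⟩
  have hclosure (x : R) (hx : IsIntegralOverIdeal I x) : IsIntegralOverIdeal J x :=
    .of_isReduction (IsNoetherian.noetherian _) (hx.isReduction_sup_span_singleton.trans hIJ)
      (Ideal.mem_sup_right (Ideal.mem_span_singleton_self x))
  exact ⟨Set.ext fun x ↦ ⟨.mono hJI, hclosure x⟩, fun x hx ↦ hclosure x (.of_mem hx)⟩
end

section
/- Let I be an ideal of a Noetherian local ring R with infinite residue field, and suppose core(I) is m-primary where m is the maximal ideal (e.g. when I is m-primary). Then core(I) is an intersection of finitely many minimal reductions of I, and the number of minimal reductions needed, γ(I), is at most the Cohen–Macaulay type of R/core(I). -/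
open IsLocalRing Polynomial

private lemma aux_isArtinian_of_quotient {R : Type*} [CommRing R] (I : Ideal R) (M : Type*)
    [AddCommGroup M] [Module R M] [Module (R ⧸ I) M] [IsScalarTower R (R ⧸ I) M]
    (h : IsArtinian (R ⧸ I) M) : IsArtinian R M := by
  haveI := h
  refine StrictMono.wellFoundedLT (f := fun p : Submodule R M =>
    ({ carrier := p
       add_mem' := fun ha hb => p.add_mem ha hb
       zero_mem' := p.zero_mem
       smul_mem' := fun cbar x hx => by
         obtain ⟨r, rfl⟩ := Ideal.Quotient.mk_surjective cbar
         rw [← Ideal.Quotient.algebraMap_eq, algebraMap_smul]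
         exact p.smul_mem r hx } : Submodule (R ⧸ I) M)) ?_
  intro p q hpq
  rw [SetLike.lt_iff_le_and_exists] at hpq ⊢
  exact ⟨fun x hx => hpq.1 hx, hpq.2⟩

private lemma aux_artinian {R : Type*} [CommRing R] {I : Ideal R} (hI : I.IsMaximal) :
    ∀ (k : ℕ) (M : Type*) [AddCommGroup M] [Module R M], IsNoetherian R M →
      (I ^ k) • (⊤ : Submodule R M) = ⊥ → IsArtinian R M := by
  intro k
  induction k with
  | zero =>
    intro M _ _ _ h
    rw [pow_zero, Ideal.one_eq_top, Submodule.top_smul] at h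
    haveI : Subsingleton M := by
      refine ⟨fun a b => ?_⟩
      have ha : a ∈ (⊥ : Submodule R M) := h ▸ Submodule.mem_top
      have hb : b ∈ (⊥ : Submodule R M) := h ▸ Submodule.mem_top
      rw [Submodule.mem_bot] at ha hb; rw [ha, hb]
    haveI : Subsingleton (Submodule R M) := by
      refine ⟨fun p q => ?_⟩
      ext x
      rw [Subsingleton.elim x (0 : M)]
      simp [p.zero_mem, q.zero_mem]
    exact ⟨Finite.wellFounded_of_trans_of_irrefl _⟩
  | succ l ih =>
    intro M _ _ hNoeth h
    haveI : IsNoetherian R M := hNoeth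
    set N : Submodule R M := (I ^ l) • ⊤ with hN
    have hq : IsArtinian R (M ⧸ N) := by
      apply ih (M ⧸ N) inferInstance
      have h1 : Submodule.map N.mkQ ((I ^ l) • (⊤ : Submodule R M))
          = (I ^ l) • (⊤ : Submodule R (M ⧸ N)) := by
        rw [Submodule.map_smul'', Submodule.map_top, Submodule.range_mkQ]
      rw [← h1, ← hN, eq_bot_iff]
      rintro y ⟨x, hx, rfl⟩
      simpa using (Submodule.Quotient.mk_eq_zero N).2 hx
    have htor : Module.IsTorsionBySet R N (I : Set R) := by
      rintro ⟨x, hx⟩ a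
      have hx' : x ∈ (I ^ l) • (⊤ : Submodule R M) := by rw [← hN]; exact hx
      have hmem : (a : R) • x ∈ (I ^ (l + 1)) • (⊤ : Submodule R M) := by
        rw [pow_succ', mul_smul]
        exact Submodule.smul_mem_smul a.2 hx'
      rw [h, Submodule.mem_bot] at hmem
      exact Subtype.ext (by simpa using hmem)
    letI : Module (R ⧸ I) N := htor.module
    haveI : IsScalarTower R (R ⧸ I) N := htor.isScalarTower
    haveI := hI
    letI : Field (R ⧸ I) := Ideal.Quotient.field I
    haveI : IsNoetherian (R ⧸ I) N := isNoetherian_of_tower R inferInstance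
    haveI : Module.Finite (R ⧸ I) N := (IsNoetherian.iff_fg (K := R ⧸ I) (V := ↥N)).mp inferInstance
    haveI : IsArtinian (R ⧸ I) N := isArtinian_of_fg_of_artinian'
    have hNa : IsArtinian R N := aux_isArtinian_of_quotient I N ‹_›
    exact (isArtinian_iff_submodule_quotient N).2 ⟨hNa, hq⟩


/-- If `core(I)` is `m`-primary, then `core(I)` is a finite intersection of minimal
reductions, and `γ(I)` is at most the type of `R/core(I)` (the length of the socle). -/
theorem stmt4 {R : Type*} [CommRing R] [IsNoetherianRing R] [IsLocalRing R]
    [Infinite (ResidueField R)]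
    (I : Ideal R) (hc : (coreIdeal R I).radical = maximalIdeal R) :
    (∃ t : ℕ, ∃ J : Fin t → Ideal R,
        (∀ i, Minimal (IsReduction R I) (J i)) ∧ coreIdeal R I = ⨅ i, J i) ∧
      (gammaI R I : WithBot ℕ∞) ≤
        modLength R ↥(⨅ a ∈ maximalIdeal R,
          LinearMap.ker ((LinearMap.lsmul R (R ⧸ coreIdeal R I)) a)) := by
  classical
  set c : Ideal R := coreIdeal R I with hc'
  -- basic facts
  have hredI : IsReduction R I I := ⟨le_rfl, 0, by rw [pow_one, pow_zero, mul_one]⟩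
  have hTred_c : ∀ J, IsReduction R I J → c ≤ J := by
    intro J hJ
    rw [hc']
    exact sInf_le hJ
  have hcI : c ≤ I := hTred_c I hredI
  -- m^k ≤ c
  obtain ⟨k, hk⟩ : ∃ k, (maximalIdeal R) ^ k ≤ c := by
    obtain ⟨k, hk⟩ := Ideal.exists_radical_pow_le_of_fg c
      (by rw [hc]; exact IsNoetherian.noetherian _)
    exact ⟨k, by rwa [hc] at hk⟩
  -- quotient is Artinian
  have hkQ : (maximalIdeal R ^ k) • (⊤ : Submodule R (R ⧸ c)) = ⊥ := by
    refine le_bot_iff.1 (Submodule.smul_le.2 fun r hr y _ => ?_)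
    obtain ⟨a, rfl⟩ := Submodule.Quotient.mk_surjective c y
    rw [← Submodule.Quotient.mk_smul, Submodule.mem_bot,
      Submodule.Quotient.mk_eq_zero]
    exact hk (Ideal.mul_mem_right a _ hr)
  have hart : IsArtinian R (R ⧸ c) :=
    aux_artinian (IsLocalRing.maximalIdeal.isMaximal R) k (R ⧸ c) inferInstance hkQ
  have hwf : WellFoundedLT {p : Ideal R // c ≤ p} :=
    (Submodule.comapMkQRelIso c).symm.strictMono.wellFoundedLT
  -- minimal elements
  have hmin : ∀ T : Set (Ideal R), (∀ J ∈ T, c ≤ J) → ∀ J0 ∈ T,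
      ∃ K, K ∈ T ∧ K ≤ J0 ∧ ∀ K' ∈ T, K' ≤ K → K = K' := by
    intro T hT J0 hJ0
    have hne : {p : {p : Ideal R // c ≤ p} | p.1 ∈ T ∧ p.1 ≤ J0}.Nonempty :=
      ⟨⟨J0, hT J0 hJ0⟩, hJ0, le_rfl⟩
    obtain ⟨K, ⟨hKT, hKle⟩, hKmin⟩ := hwf.wf.has_min _ hne
    refine ⟨K.1, hKT, hKle, fun K' hK'T hle => ?_⟩
    by_contra hne'
    exact hKmin ⟨K', hT K' hK'T⟩ ⟨hK'T, le_trans hle hKle⟩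
      (Subtype.coe_lt_coe.1 (lt_of_le_of_ne hle fun h => hne' h.symm))
  -- every reduction contains a minimal reduction
  have hminred : ∀ J0, IsReduction R I J0 → ∃ K, Minimal (IsReduction R I) K ∧ K ≤ J0 := by
    intro J0 h0
    obtain ⟨K, hKT, hKle, hKmin⟩ := hmin {J | IsReduction R I J} hTred_c J0 h0
    exact ⟨K, ⟨hKT, fun y hy hyK => (hKmin y hy hyK).le⟩, hKle⟩
  -- c is a finite intersection of reductions
  obtain ⟨t, f, hf, hceq⟩ : ∃ t : ℕ, ∃ f : Fin t → Ideal R,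
      (∀ i, IsReduction R I (f i)) ∧ c = ⨅ i, f i := by
    set U : Set (Ideal R) := {J | c ≤ J ∧ ∃ t : ℕ, ∃ f : Fin t → Ideal R,
      (∀ i, IsReduction R I (f i)) ∧ J = ⨅ i, f i} with hU
    have hIU : I ∈ U := ⟨hcI, 1, fun _ => I, fun _ => hredI, by simp⟩
    obtain ⟨K, hKU, -, hKmin⟩ := hmin U (fun J hJ => hJ.1) I hIU
    obtain ⟨hcK, t, f, hfred, hKeq⟩ := hKU
    have hKc : K ≤ c := by
      rw [hc']
      refine le_sInf fun L hL => ?_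
      by_contra hKL
      have hcons : (⨅ i, (Fin.cons L f : Fin (t + 1) → Ideal R) i) = L ⊓ ⨅ j, f j := by
        apply le_antisymm
        · exact le_inf (iInf_le _ 0) (le_iInf fun j => (iInf_le _ j.succ).trans_eq (Fin.cons_succ _ _ _))
        · refine le_iInf fun i => ?_
          refine Fin.cases inf_le_left (fun j => inf_le_right.trans ?_) i
          simpa using iInf_le f j
      have hmem : K ⊓ L ∈ U := by
        refine ⟨le_inf hcK (hTred_c L hL), t + 1, Fin.cons L f, ?_, ?_⟩
        · intro i
          refine Fin.cases hL (fun j => by simpa using hfred j) i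
        · rw [hcons, hKeq, inf_comm]
      have := hKmin _ hmem inf_le_left
      exact hKL (this ▸ inf_le_right)
    exact ⟨t, f, hfred, (le_antisymm hcK hKc).trans hKeq⟩
  -- replace by minimal reductions
  choose g hg1 hg2 using fun i => hminred (f i) (hf i)
  have hgeq : c = ⨅ i, g i := by
    refine le_antisymm (le_iInf fun i => hTred_c _ (hg1 i).1) ((iInf_mono hg2).trans hceq.ge)
  refine ⟨⟨t, g, hg1, hgeq⟩, ?_⟩
  -- part 2
  have hgam : gammaI R I = sInf {t | ∃ J : Fin t → Ideal R,
      (∀ i, Minimal (IsReduction R I) (J i)) ∧ coreIdeal R I = ⨅ i, J i} := rfl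
  have hmemS : ∃ J : Fin (gammaI R I) → Ideal R,
      (∀ i, Minimal (IsReduction R I) (J i)) ∧ coreIdeal R I = ⨅ i, J i := by
    have h1 := Nat.sInf_mem (s := {t | ∃ J : Fin t → Ideal R,
      (∀ i, Minimal (IsReduction R I) (J i)) ∧ coreIdeal R I = ⨅ i, J i})
      ⟨t, g, hg1, by rw [← hc']; exact hgeq⟩
    rw [← hgam] at h1
    exact h1
  set Soc : Submodule R (R ⧸ c) := ⨅ a ∈ maximalIdeal R,
    LinearMap.ker ((LinearMap.lsmul R (R ⧸ c)) a) with hSoc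
  by_cases h0 : gammaI R I = 0
  · rw [h0, Nat.cast_zero]
    exact Order.krullDim_nonneg
  obtain ⟨n, hn⟩ := Nat.exists_eq_succ_of_ne_zero h0
  obtain ⟨J, hJmin, hJeq⟩ : ∃ J : Fin (n + 1) → Ideal R,
      (∀ i, Minimal (IsReduction R I) (J i)) ∧ coreIdeal R I = ⨅ i, J i := by rw [hn] at hmemS; exact hmemS
  have hJeq' : c = ⨅ i, J i := by rw [hc']; exact hJeq
  have hnle : ¬ (∃ J : Fin n → Ideal R,
      (∀ i, Minimal (IsReduction R I) (J i)) ∧ coreIdeal R I = ⨅ i, J i) := by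
    intro hmemn
    have h2 : gammaI R I ≤ n := by rw [hgam]; exact Nat.sInf_le hmemn
    rw [hn] at h2
    exact Nat.not_succ_le_self n h2
  have hcJ : ∀ i, c ≤ J i := fun i => hTred_c _ (hJmin i).1
  set Mi : Fin (n + 1) → Ideal R := fun i => ⨅ j : {j : Fin (n + 1) // j ≠ i}, J j.1 with hMi
  have hcM : ∀ i, c ≤ Mi i := fun i => le_iInf fun j => hcJ _
  have hMle : ∀ i (l : Fin (n + 1)), l ≠ i → Mi i ≤ J l := fun i l hl => iInf_le (fun j : {j : Fin (n + 1) // j ≠ i} => J j.1) ⟨l, hl⟩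
  have hMinf : ∀ i, Mi i ⊓ J i = c := by
    intro i
    refine le_antisymm ?_ (le_inf (hcM i) (hcJ i))
    rw [hJeq']
    refine le_iInf fun l => ?_
    by_cases hl : l = i
    · exact inf_le_right.trans (hl ▸ le_rfl)
    · exact inf_le_left.trans (hMle i l hl)
  have hMne : ∀ i, Mi i ≠ c := by
    intro i heq
    apply hnle
    refine ⟨fun j => J (i.succAbove j), fun j => hJmin _, ?_⟩
    apply le_antisymm
    · rw [hJeq]; exact le_iInf fun j => iInf_le _ _
    · rw [← hc', ← heq]
      refine le_iInf fun l => ?_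
      obtain ⟨z, hz⟩ := Fin.exists_succAbove_eq l.2
      exact (iInf_le _ z).trans (hz ▸ le_rfl)
  -- key socle lemma
  have hkey : ∀ (l : ℕ) (N : Submodule R (R ⧸ c)), (maximalIdeal R ^ l) • N = ⊥ → N ≠ ⊥ →
      ∃ y, y ∈ N ∧ y ∈ Soc ∧ y ≠ 0 := by
    intro l
    induction l with
    | zero =>
      intro N h hne
      rw [pow_zero, Ideal.one_eq_top, Submodule.top_smul] at h
      exact absurd h hne
    | succ l ih =>
      intro N h hne
      by_cases h' : (maximalIdeal R ^ l) • N = ⊥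
      · exact ih N h' hne
      · obtain ⟨y, hyN', hy0⟩ := (Submodule.ne_bot_iff _).1 h'
        refine ⟨y, Submodule.smul_le_right hyN', ?_, hy0⟩
        rw [hSoc]
        refine (Submodule.mem_iInf _).2 fun a => (Submodule.mem_iInf _).2 fun ha => ?_
        rw [LinearMap.mem_ker, LinearMap.lsmul_apply]
        have hmem : a • y ∈ (maximalIdeal R ^ (l + 1)) • N := by
          rw [pow_succ', mul_smul]
          exact Submodule.smul_mem_smul ha hyN'
        rw [h, Submodule.mem_bot] at hmem
        exact hmem
  -- choose socle elements
  have hxex : ∀ i : Fin (n + 1), ∃ y : R ⧸ c,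
      y ∈ Submodule.map c.mkQ (Mi i) ∧ y ∈ Soc ∧ y ≠ 0 := by
    intro i
    have hMnec : ∃ a, a ∈ Mi i ∧ a ∉ c := by
      by_contra hcon
      push_neg at hcon
      exact hMne i (le_antisymm (fun a ha => hcon a ha) (hcM i))
    obtain ⟨a, haM, hac⟩ := hMnec
    have hN : Submodule.map c.mkQ (Mi i) ≠ ⊥ := by
      intro hbot
      have h3 : c.mkQ a ∈ (⊥ : Submodule R (R ⧸ c)) := hbot ▸ Submodule.mem_map_of_mem haM
      rw [Submodule.mem_bot, Submodule.mkQ_apply, Submodule.Quotient.mk_eq_zero] at h3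
      exact hac h3
    refine hkey k _ ?_ hN
    have h5 : (maximalIdeal R ^ k) • Submodule.map c.mkQ (Mi i) ≤
        (maximalIdeal R ^ k) • (⊤ : Submodule R (R ⧸ c)) := smul_mono_right _ le_top
    exact le_bot_iff.1 (h5.trans hkQ.le)
  choose x hx1 hx2 hx3 using hxex
  have hxJ : ∀ i, x i ∉ Submodule.map c.mkQ (J i) := by
    intro i hmem
    obtain ⟨a, haM, hae⟩ := hx1 i
    obtain ⟨b, hbJ, hbe⟩ := hmem
    have hab : a - b ∈ c := by
      rw [← Submodule.Quotient.eq]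
      show c.mkQ a = c.mkQ b
      rw [hae, hbe]
    have haJ : a ∈ J i := by
      have h4 := (J i).add_mem (hcJ i hab) hbJ
      simpa using h4
    have hacmem : a ∈ c := by
      rw [← hMinf i]
      exact Submodule.mem_inf.2 ⟨haM, haJ⟩
    apply hx3 i
    rw [← hae, Submodule.mkQ_apply, Submodule.Quotient.mk_eq_zero]
    exact hacmem
  have hxJ' : ∀ (i j : Fin (n + 1)), j ≠ i → x j ∈ Submodule.map c.mkQ (J i) :=
    fun i j hj => Submodule.map_mono (hMle j i (Ne.symm hj)) (hx1 j)
  -- the chain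
  set X : Fin (n + 1) → ↥Soc := fun i => ⟨x i, hx2 i⟩ with hX
  set F : Fin (n + 2) → Submodule R ↥Soc := fun l =>
    Submodule.span R (X '' {j : Fin (n + 1) | (j : ℕ) < (l : ℕ)}) with hF
  have hstrict : StrictMono F := by
    rw [Fin.strictMono_iff_lt_succ]
    intro i
    have hsub : (X '' {j : Fin (n + 1) | (j : ℕ) < ((i.castSucc : Fin (n + 2)) : ℕ)}) ⊆
        X '' {j : Fin (n + 1) | (j : ℕ) < ((i.succ : Fin (n + 2)) : ℕ)} := by
      apply Set.image_mono
      intro j hj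
      simp only [Set.mem_setOf_eq, Fin.coe_castSucc, Fin.val_succ] at *
      exact Nat.lt_succ_of_lt hj
    refine lt_of_le_of_ne (Submodule.span_mono hsub) fun hEq => ?_
    have hXmem : X i ∈ F i.succ := Submodule.subset_span ⟨i, by simp, rfl⟩
    rw [← hEq] at hXmem
    have hQ : x i ∈ Submodule.span R
        (Subtype.val '' (X '' {j : Fin (n + 1) | (j : ℕ) < ((i.castSucc : Fin (n + 2)) : ℕ)})) := by
      have h2 := Submodule.mem_map_of_mem (f := Soc.subtype) hXmem
      rw [hF, Submodule.map_span] at h2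
      simpa using h2
    rw [Submodule.mem_span_set'] at hQ
    obtain ⟨mN, fC, gC, hsum⟩ := hQ
    apply hxJ i
    rw [← hsum]
    refine Submodule.sum_mem _ fun idx _ => Submodule.smul_mem _ _ ?_
    obtain ⟨u, hu, huv⟩ := (gC idx).2
    obtain ⟨j, hj, rfl⟩ := hu
    have hji : j ≠ i := by
      intro hji
      subst hji
      simp only [Set.mem_setOf_eq, Fin.coe_castSucc] at hj
      exact lt_irrefl _ hj
    have : (↑(X j) : R ⧸ c) = x j := rfl
    rw [← huv, this]
    exact hxJ' i j hji
  have hlen := Order.LTSeries.length_le_krullDim (LTSeries.mk (n + 1) F hstrict)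
  rw [hn]
  exact hlen
end

section
/- In R = k[U,V,W]_{(U,V,W)}/(U^2+V^2, VW) with I = (u,v) as above, for any unit λ and any μ in R the element uw lies in the ideal (λu + μv), but uw does not lie in I^2. Hence core(I) = I^2 is not an intersection of general one-generated reductions of I. -/
open IsLocalRing Polynomial

/-- The ideal `(U² + V², V·W)` of `k[U,V,W]`. -/
noncomputable def relIdeal (k : Type*) [Field k] : Ideal (MvPolynomial (Fin 3) k) :=
  Ideal.span {MvPolynomial.X 0 ^ 2 + MvPolynomial.X 1 ^ 2, MvPolynomial.X 1 * MvPolynomial.X 2}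

/-- `k[U,V,W]/(U²+V², VW)`. -/
abbrev Q7 (k : Type*) [Field k] := MvPolynomial (Fin 3) k ⧸ relIdeal k

/-- The image of `(U,V,W)` in `k[U,V,W]/(U²+V², VW)`. -/
noncomputable def P7 (k : Type*) [Field k] : Ideal (Q7 k) :=
  Ideal.map (Ideal.Quotient.mk (relIdeal k))
    (Ideal.span {MvPolynomial.X 0, MvPolynomial.X 1, MvPolynomial.X 2})

/-- `R = k[U,V,W]_{(U,V,W)}/(U²+V², VW)`. -/
abbrev R7 (k : Type*) [Field k] [(P7 k).IsPrime] := Localization.AtPrime (P7 k)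

/-- The image `u` of `U` in `R`. -/
noncomputable def u7 (k : Type*) [Field k] [(P7 k).IsPrime] : R7 k :=
  algebraMap (Q7 k) (R7 k) (Ideal.Quotient.mk (relIdeal k) (MvPolynomial.X 0))

/-- The image `v` of `V` in `R`. -/
noncomputable def v7 (k : Type*) [Field k] [(P7 k).IsPrime] : R7 k :=
  algebraMap (Q7 k) (R7 k) (Ideal.Quotient.mk (relIdeal k) (MvPolynomial.X 1))

/-- The image `w` of `W` in `R`. -/
noncomputable def w7 (k : Type*) [Field k] [(P7 k).IsPrime] : R7 k :=
  algebraMap (Q7 k) (R7 k) (Ideal.Quotient.mk (relIdeal k) (MvPolynomial.X 2))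

/-- The ideal `I = (u, v)`. -/
noncomputable def I7 (k : Type*) [Field k] [(P7 k).IsPrime] : Ideal (R7 k) :=
  Ideal.span {u7 k, v7 k}

section Aux

set_option maxHeartbeats 1000000
set_option synthInstance.maxHeartbeats 400000
set_option maxRecDepth 8000

variable (k : Type*) [Field k]

/-- The test ring `k[x,y]/(x²,y²)` realized as dual numbers over dual numbers. -/
abbrev B8 := DualNumber (DualNumber k)

noncomputable def xB : B8 k := TrivSqZeroExt.inl DualNumber.eps
noncomputable def yB : B8 k := DualNumber.eps

lemma xB_sq : xB k * xB k = 0 := by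
  rw [xB, ← TrivSqZeroExt.inl_mul, DualNumber.eps_mul_eps, TrivSqZeroExt.inl_zero]

lemma xy_ne : xB k * yB k ≠ 0 := by
  rw [xB, yB, show (DualNumber.eps : B8 k) = TrivSqZeroExt.inr 1 from rfl,
    TrivSqZeroExt.inl_mul_inr, smul_eq_mul, mul_one]
  intro h
  have h1 : (DualNumber.eps : DualNumber k) = 0 := by
    have h' := congrArg TrivSqZeroExt.snd h
    rwa [TrivSqZeroExt.snd_inr, TrivSqZeroExt.snd_zero] at h'
  have h2 : (1 : k) = 0 := by
    have h' := congrArg TrivSqZeroExt.snd h1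
    rwa [DualNumber.eps, TrivSqZeroExt.snd_inr, TrivSqZeroExt.snd_zero] at h'
  exact one_ne_zero h2

/-- The algebra map `k[U,V,W] → B` with `U ↦ x`, `V ↦ 0`, `W ↦ y`. -/
noncomputable def phi8 : MvPolynomial (Fin 3) k →ₐ[k] B8 k :=
  MvPolynomial.aeval ![xB k, 0, yB k]

lemma phi8_X0 : phi8 k (MvPolynomial.X 0) = xB k := by
  rw [phi8, MvPolynomial.aeval_X, Matrix.cons_val_zero]
lemma phi8_X1 : phi8 k (MvPolynomial.X 1) = 0 := by
  rw [phi8, MvPolynomial.aeval_X, Matrix.cons_val_one, Matrix.cons_val_zero]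
lemma phi8_X2 : phi8 k (MvPolynomial.X 2) = yB k := by
  rw [phi8, MvPolynomial.aeval_X, Matrix.cons_val_two]
  rfl

lemma pi_x : ((TrivSqZeroExt.fstHom k k k).comp
    (TrivSqZeroExt.fstHom k (DualNumber k) (DualNumber k))) (xB k) = 0 := by
  simp only [AlgHom.coe_comp, Function.comp_apply, TrivSqZeroExt.fstHom_apply, xB,
    TrivSqZeroExt.fst_inl, DualNumber.eps, TrivSqZeroExt.fst_inr]

lemma pi_y : ((TrivSqZeroExt.fstHom k k k).comp
    (TrivSqZeroExt.fstHom k (DualNumber k) (DualNumber k))) (yB k) = 0 := by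
  simp only [AlgHom.coe_comp, Function.comp_apply, TrivSqZeroExt.fstHom_apply, yB,
    DualNumber.eps, TrivSqZeroExt.fst_inr, map_zero]

lemma phi8_rel : ∀ a ∈ relIdeal k, phi8 k a = 0 := by
  intro a ha
  have h : relIdeal k ≤ RingHom.ker (phi8 k).toRingHom := by
    rw [relIdeal, Ideal.span_le]
    rintro p (rfl | rfl) <;> rw [SetLike.mem_coe, RingHom.mem_ker]
    · show phi8 k (MvPolynomial.X 0 ^ 2 + MvPolynomial.X 1 ^ 2) = 0
      rw [map_add, map_pow, map_pow, phi8_X0, phi8_X1, pow_two, xB_sq,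
        zero_pow two_ne_zero, add_zero]
    · show phi8 k (MvPolynomial.X 1 * MvPolynomial.X 2) = 0
      rw [map_mul, phi8_X1, zero_mul]
  exact h ha

/-- The induced map `Q7 k → B`. -/
noncomputable def psi8 : Q7 k →+* B8 k :=
  Ideal.Quotient.lift (relIdeal k) (phi8 k).toRingHom (phi8_rel k)

lemma psi8_mk (p : MvPolynomial (Fin 3) k) :
    psi8 k (Ideal.Quotient.mk (relIdeal k) p) = phi8 k p := rfl

lemma mem_span_X_of_constantCoeff_zero (p : MvPolynomial (Fin 3) k)
    (hp : MvPolynomial.constantCoeff p = 0) :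
    p ∈ Ideal.span {(MvPolynomial.X 0 : MvPolynomial (Fin 3) k),
      MvPolynomial.X 1, MvPolynomial.X 2} := by
  have himg : (MvPolynomial.X '' (Set.univ : Set (Fin 3)) :
      Set (MvPolynomial (Fin 3) k)) =
      {MvPolynomial.X 0, MvPolynomial.X 1, MvPolynomial.X 2} := by
    ext q
    constructor
    · rintro ⟨i, -, rfl⟩
      fin_cases i <;> simp
    · rintro (rfl | rfl | rfl)
      · exact ⟨0, trivial, rfl⟩
      · exact ⟨1, trivial, rfl⟩
      · exact ⟨2, trivial, rfl⟩
  rw [← himg, MvPolynomial.mem_ideal_span_X_image]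
  intro m hm
  have hm0 : m ≠ 0 := by
    rintro rfl
    exact (MvPolynomial.mem_support_iff.mp hm) hp
  obtain ⟨i, hi⟩ := Finsupp.ne_iff.mp hm0
  exact ⟨i, Set.mem_univ i, by simpa using hi⟩

lemma psi8_isUnit [(P7 k).IsPrime] (s : (P7 k).primeCompl) : IsUnit (psi8 k s) := by
  obtain ⟨p, hp⟩ := Ideal.Quotient.mk_surjective (I := relIdeal k) (s : Q7 k)
  have hs : (s : Q7 k) ∉ P7 k := s.2
  rw [← hp, psi8_mk]
  have hfst : (phi8 k p).fst.fst = MvPolynomial.constantCoeff p := by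
    have hcomp : ((TrivSqZeroExt.fstHom k k k).comp
        ((TrivSqZeroExt.fstHom k (DualNumber k) (DualNumber k)))).comp (phi8 k) =
        MvPolynomial.aeval (fun _ : Fin 3 => (0 : k)) := by
      apply MvPolynomial.algHom_ext
      intro i
      rw [AlgHom.comp_apply, MvPolynomial.aeval_X]
      fin_cases i
      · show ((TrivSqZeroExt.fstHom k k k).comp
            (TrivSqZeroExt.fstHom k (DualNumber k) (DualNumber k)))
            ((phi8 k) (MvPolynomial.X 0)) = 0
        rw [phi8_X0]; exact pi_x k
      · show ((TrivSqZeroExt.fstHom k k k).comp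
            (TrivSqZeroExt.fstHom k (DualNumber k) (DualNumber k)))
            ((phi8 k) (MvPolynomial.X 1)) = 0
        rw [phi8_X1, map_zero]
      · show ((TrivSqZeroExt.fstHom k k k).comp
            (TrivSqZeroExt.fstHom k (DualNumber k) (DualNumber k)))
            ((phi8 k) (MvPolynomial.X 2)) = 0
        rw [phi8_X2]; exact pi_y k
    have := congrArg (fun f => f p) hcomp
    simpa [MvPolynomial.aeval_zero'] using this
  have hne : MvPolynomial.constantCoeff p ≠ 0 := by
    intro h0
    apply hs
    rw [← hp, P7]
    exact Ideal.mem_map_of_mem _ (mem_span_X_of_constantCoeff_zero k p h0)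
  rw [TrivSqZeroExt.isUnit_iff_isUnit_fst, TrivSqZeroExt.isUnit_iff_isUnit_fst, hfst]
  exact hne.isUnit

/-- The induced map `R7 k → B`. -/
noncomputable def chi8 [(P7 k).IsPrime] : R7 k →+* B8 k :=
  IsLocalization.lift (M := (P7 k).primeCompl) (S := R7 k) (P := B8 k) (psi8_isUnit k)

variable [(P7 k).IsPrime]

lemma chi8_u : chi8 k (u7 k) = xB k := by
  rw [u7, chi8, IsLocalization.lift_eq, psi8_mk, phi8_X0]

lemma chi8_v : chi8 k (v7 k) = 0 := by
  rw [v7, chi8, IsLocalization.lift_eq, psi8_mk, phi8_X1]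

lemma chi8_w : chi8 k (w7 k) = yB k := by
  rw [w7, chi8, IsLocalization.lift_eq, psi8_mk, phi8_X2]

lemma vw_zero : v7 k * w7 k = 0 := by
  rw [v7, w7, ← map_mul, ← map_mul]
  have : Ideal.Quotient.mk (relIdeal k)
      (MvPolynomial.X 1 * MvPolynomial.X 2) = 0 := by
    rw [Ideal.Quotient.eq_zero_iff_mem, relIdeal]
    exact Ideal.subset_span (by simp)
  rw [this, map_zero]

lemma usq_add_vsq : u7 k * u7 k + v7 k * v7 k = 0 := by
  rw [u7, v7, ← map_mul, ← map_mul, ← map_mul, ← map_mul, ← map_add, ← map_add]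
  have : Ideal.Quotient.mk (relIdeal k)
      (MvPolynomial.X 0 * MvPolynomial.X 0 + MvPolynomial.X 1 * MvPolynomial.X 1) = 0 := by
    rw [Ideal.Quotient.eq_zero_iff_mem, relIdeal]
    have : (MvPolynomial.X 0 * MvPolynomial.X 0 + MvPolynomial.X 1 * MvPolynomial.X 1 :
        MvPolynomial (Fin 3) k) = MvPolynomial.X 0 ^ 2 + MvPolynomial.X 1 ^ 2 := by ring
    rw [this]
    exact Ideal.subset_span (by simp)
  rw [this, map_zero]

lemma chi8_uw_ne : chi8 k (u7 k * w7 k) ≠ 0 := by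
  rw [map_mul, chi8_u, chi8_w]
  exact xy_ne k

lemma J8_le : Ideal.span {v7 k, u7 k * u7 k} ≤ I7 k := by
  rw [Ideal.span_le, I7]
  rintro x (rfl | rfl)
  · exact Ideal.subset_span (by simp)
  · exact Ideal.mul_mem_left _ _ (Ideal.subset_span (by simp))

lemma I7_sq_eq : (I7 k) ^ 2 = Ideal.span {v7 k, u7 k * u7 k} * (I7 k) ^ 1 := by
  rw [pow_one, pow_two]
  conv_lhs => rw [I7]
  conv_rhs => rw [I7]
  apply le_antisymm
  · rw [Ideal.span_mul_span', Ideal.span_le]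
    have hvJ : v7 k ∈ Ideal.span {v7 k, u7 k * u7 k} := Ideal.subset_span (by simp)
    have huI : u7 k ∈ Ideal.span {u7 k, v7 k} := Ideal.subset_span (by simp)
    have hvI : v7 k ∈ Ideal.span {u7 k, v7 k} := Ideal.subset_span (by simp)
    have hvv : v7 k * v7 k ∈ Ideal.span {v7 k, u7 k * u7 k} * Ideal.span {u7 k, v7 k} :=
      Ideal.mul_mem_mul hvJ hvI
    have huu : u7 k * u7 k ∈ Ideal.span {v7 k, u7 k * u7 k} * Ideal.span {u7 k, v7 k} := by
      have h : u7 k * u7 k = -(v7 k * v7 k) := by grind [usq_add_vsq k]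
      have hn : -(v7 k * v7 k) ∈ Ideal.span {v7 k, u7 k * u7 k} * Ideal.span {u7 k, v7 k} := by
        have := Ideal.mul_mem_left _ (-1) hvv
        grind
      rwa [← h] at hn
    intro x hx
    rw [Set.mem_mul] at hx
    obtain ⟨a, ha, b, hb, rfl⟩ := hx
    simp only [Set.mem_insert_iff, Set.mem_singleton_iff] at ha hb
    rcases ha with rfl | rfl <;> rcases hb with rfl | rfl
    · exact huu
    · rw [mul_comm (u7 k) (v7 k)]; exact Ideal.mul_mem_mul hvJ huI
    · exact Ideal.mul_mem_mul hvJ huI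
    · exact hvv
  · apply Ideal.mul_mono_left
    rw [← I7]
    exact J8_le k

/-- `(v, u²)` is a reduction of `I = (u,v)`. -/
lemma J8_red : IsReduction (R7 k) (I7 k) (Ideal.span {v7 k, u7 k * u7 k}) :=
  ⟨J8_le k, 1, I7_sq_eq k⟩

lemma uw_notMem_J8 : u7 k * w7 k ∉ Ideal.span {v7 k, u7 k * u7 k} := by
  intro h
  have hmem := Ideal.mem_map_of_mem (chi8 k) h
  rw [Ideal.map_span] at hmem
  have himg : (chi8 k '' {v7 k, u7 k * u7 k} : Set (B8 k)) ⊆ {0} := by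
    rintro x ⟨y, (rfl | rfl), rfl⟩
    · simp [chi8_v]
    · simp [map_mul, chi8_u, xB_sq]
  have hle : Ideal.span (chi8 k '' {v7 k, u7 k * u7 k}) ≤ ⊥ := by
    rw [← Ideal.span_singleton_eq_bot.mpr rfl]
    exact Ideal.span_mono himg
  exact chi8_uw_ne k (hle hmem)

end Aux

set_option maxHeartbeats 1000000 in
set_option synthInstance.maxHeartbeats 400000 in
/-- In `R = k[U,V,W]_{(U,V,W)}/(U²+V², VW)` with `I = (u,v)`: for any unit `λ` and any `μ`,
`uw ∈ (λu + μv)` but `uw ∉ I²`; hence `core(I) = I²` is not an intersection of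
one-generated ideals of the form `(λu + μv)` with `λ` a unit. -/
theorem stmt8 (k : Type*) [Field k] [Infinite k] [(P7 k).IsPrime] :
    (∀ lam mu' : R7 k, IsUnit lam → u7 k * w7 k ∈ Ideal.span {lam * u7 k + mu' * v7 k}) ∧
    u7 k * w7 k ∉ (I7 k) ^ 2 ∧
    ∀ S : Set (Ideal (R7 k)), S.Nonempty →
      (∀ J ∈ S, ∃ lam mu' : R7 k, IsUnit lam ∧ J = Ideal.span {lam * u7 k + mu' * v7 k}) →
      sInf S ≠ coreIdeal (R7 k) (I7 k) := by
  have huw_span : ∀ lam mu' : R7 k, IsUnit lam →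
      u7 k * w7 k ∈ Ideal.span {lam * u7 k + mu' * v7 k} := by
    intro lam mu' hlam
    rw [Ideal.mem_span_singleton]
    refine ⟨(hlam.unit⁻¹ : _) * w7 k, ?_⟩
    have hexp : (lam * u7 k + mu' * v7 k) * ((hlam.unit⁻¹ : _) * w7 k) =
        (lam * (hlam.unit⁻¹ : _)) * (u7 k * w7 k) +
        (mu' * (hlam.unit⁻¹ : _)) * (v7 k * w7 k) := by ring
    rw [hexp, hlam.mul_val_inv, one_mul, vw_zero, mul_zero, add_zero]
  have huw_sq : u7 k * w7 k ∉ (I7 k) ^ 2 := by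
    intro h
    apply uw_notMem_J8 k
    have hle : (I7 k) ^ 2 ≤ Ideal.span {v7 k, u7 k * u7 k} := by
      rw [I7_sq_eq k]
      exact Ideal.mul_le_left
    exact hle h
  refine ⟨huw_span, huw_sq, ?_⟩
  intro S hS hform heq
  have huwS : u7 k * w7 k ∈ sInf S := by
    rw [Ideal.mem_sInf]
    intro J hJ
    obtain ⟨lam, mu', hlam, rfl⟩ := hform J hJ
    exact huw_span lam mu' hlam
  rw [heq] at huwS
  have hcore_le : coreIdeal (R7 k) (I7 k) ≤ Ideal.span {v7 k, u7 k * u7 k} :=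
    sInf_le (J8_red k)
  exact uw_notMem_J8 k (hcore_le huwS)
end

section
/- Let I = (U^2, UV, V^3) in R = k[U,V]_{(U,V)} with k an infinite field. Then no minimal reduction of I is generated by polynomials homogeneous in U and V. -/
namespace Stmt10Aux
open MvPolynomial

variable {k : Type*} [Field k]

/-- exponent finsupp (a,b) on Fin 2 -/
noncomputable def su (a b : ℕ) : Fin 2 →₀ ℕ := Finsupp.single 0 a + Finsupp.single 1 b

@[simp] lemma su_apply0 (a b : ℕ) : su a b 0 = a := by
  simp [su, Finsupp.single_apply]

@[simp] lemma su_apply1 (a b : ℕ) : su a b 1 = b := by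
  simp [su, Finsupp.single_apply]

lemma eq_su (m : Fin 2 →₀ ℕ) : m = su (m 0) (m 1) := by
  ext i
  fin_cases i <;> simp

lemma deg2 (m : Fin 2 →₀ ℕ) : m.degree = m 0 + m 1 := by
  rw [Finsupp.degree_apply, Finset.sum_subset (Finset.subset_univ m.support)]
  · exact Fin.sum_univ_two m
  · intro x _ hx
    simpa using (Finsupp.notMem_support_iff.mp hx)

lemma CXX_eq_monomial (c : k) (a b : ℕ) :
    C c * X 0 ^ a * X 1 ^ b = monomial (su a b) c := by
  rw [X_pow_eq_monomial, X_pow_eq_monomial, C_apply, monomial_mul, monomial_mul, su]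
  simp

theorem homog_eq_sum {p : MvPolynomial (Fin 2) k} {d : ℕ} (hp : p.IsHomogeneous d) :
    p = ∑ j ∈ Finset.range (d+1), C (coeff (su (d-j) j) p) * X 0 ^ (d-j) * X 1 ^ j := by
  apply MvPolynomial.ext
  intro m
  rw [coeff_sum]
  simp_rw [CXX_eq_monomial, coeff_monomial]
  by_cases h : m 0 + m 1 = d
  · rw [Finset.sum_eq_single_of_mem (m 1)]
    · have hmeq : su (d - m 1) (m 1) = m := by
        rw [show d - m 1 = m 0 by omega]; exact (eq_su m).symm
      rw [if_pos hmeq, hmeq]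
    · exact Finset.mem_range.mpr (by omega)
    · intro j _ hj
      rw [if_neg]
      intro hsu
      exact hj (by simpa using congrArg (fun f => f 1) hsu)
  · rw [hp.coeff_eq_zero (by rw [deg2]; exact h)]
    symm
    apply Finset.sum_eq_zero
    intro j hj
    rw [if_neg]
    intro hsu
    apply h
    have h0 := congrArg (fun f => f 0) hsu
    have h1 := congrArg (fun f => f 1) hsu
    simp at h0 h1
    have : j ≤ d := by simpa using Nat.lt_succ_iff.mp (Finset.mem_range.mp hj)
    omega

theorem homog_aeval_dvd {p : MvPolynomial (Fin 2) k} {d : ℕ} (hp : p.IsHomogeneous d)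
    (w : ℕ) (q : Fin 2 → Polynomial k) (hq : ∀ i, (Polynomial.X : Polynomial k) ^ w ∣ q i) :
    (Polynomial.X : Polynomial k) ^ (w * d) ∣ aeval q p := by
  rw [aeval_def, eval₂_eq]
  apply Finset.dvd_sum
  intro m hm
  have hdeg : ∑ i ∈ m.support, m i = d := by
    have := hp (mem_support_iff.mp hm)
    rw [show (1 : Fin 2 → ℕ) = fun _ => 1 from rfl, ← Finsupp.degree_eq_weight_one,
      Finsupp.degree_apply] at this
    exact this
  apply Dvd.dvd.mul_left
  calc (Polynomial.X : Polynomial k) ^ (w * d)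
      = ∏ i ∈ m.support, ((Polynomial.X : Polynomial k) ^ w) ^ m i := by
        rw [Finset.prod_pow_eq_pow_sum, hdeg, ← pow_mul]
    _ ∣ ∏ i ∈ m.support, q i ^ m i :=
        Finset.prod_dvd_prod_of_dvd _ _ (fun i _ => pow_dvd_pow_of_dvd (hq i) (m i))


lemma X_image_univ :
    (MvPolynomial.X '' (Set.univ : Set (Fin 2)) : Set (MvPolynomial (Fin 2) k)) = {X 0, X 1} := by
  ext p
  simp only [Set.image_univ, Set.mem_range, Set.mem_insert_iff, Set.mem_singleton_iff]
  constructor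
  · rintro ⟨i, rfl⟩
    fin_cases i
    · left; rfl
    · right; rfl
  · rintro (rfl | rfl)
    · exact ⟨0, rfl⟩
    · exact ⟨1, rfl⟩

lemma mem_m_of_constantCoeff_eq_zero {σ : (MvPolynomial (Fin 2) k)}
    (h : constantCoeff σ = 0) : σ ∈ Ideal.span ({X 0, X 1} : Set (MvPolynomial (Fin 2) k)) := by
  rw [← X_image_univ, mem_ideal_span_X_image]
  intro m hm
  have hm' := mem_support_iff.mp hm
  by_contra hc
  push_neg at hc
  have : m = 0 := by
    ext i
    simpa using hc i (Set.mem_univ i)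
  rw [this] at hm'
  exact hm' (by simpa [constantCoeff_eq] using h)

lemma constantCoeff_ne_zero {σ : (MvPolynomial (Fin 2) k)}
    (h : σ ∉ Ideal.span ({X 0, X 1} : Set (MvPolynomial (Fin 2) k))) : constantCoeff σ ≠ 0 :=
  fun hc => h (mem_m_of_constantCoeff_eq_zero hc)

variable [hP : (Ideal.span ({X 0, X 1} : Set (MvPolynomial (Fin 2) k))).IsPrime]

lemma exists_clear (W : Ideal (MvPolynomial (Fin 2) k)) (z : (MvPolynomial (Fin 2) k))
    (hz : algebraMap (MvPolynomial (Fin 2) k) (Localization.AtPrime (Ideal.span ({X 0, X 1} : Set (MvPolynomial (Fin 2) k)))) z ∈ Ideal.map (algebraMap (MvPolynomial (Fin 2) k) (Localization.AtPrime (Ideal.span ({X 0, X 1} : Set (MvPolynomial (Fin 2) k))))) W) :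
    ∃ σ : (MvPolynomial (Fin 2) k), σ ∉ Ideal.span ({X 0, X 1} : Set (MvPolynomial (Fin 2) k)) ∧ σ * z ∈ W := by
  rw [IsLocalization.mem_map_algebraMap_iff (Ideal.span ({X 0, X 1} : Set (MvPolynomial (Fin 2) k))).primeCompl] at hz
  obtain ⟨⟨a, s⟩, h⟩ := hz
  have hinj : Function.Injective (algebraMap (MvPolynomial (Fin 2) k) (Localization.AtPrime (Ideal.span ({X 0, X 1} : Set (MvPolynomial (Fin 2) k))))) := by
    apply IsLocalization.injective (M := (Ideal.span ({X 0, X 1} : Set (MvPolynomial (Fin 2) k))).primeCompl)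
    intro x hx
    exact mem_nonZeroDivisors_of_ne_zero (fun h0 => hx (h0 ▸ (Ideal.zero_mem _)))
  have : z * (s : (MvPolynomial (Fin 2) k)) = (a : (MvPolynomial (Fin 2) k)) := by
    apply hinj
    rw [map_mul]
    exact h
  refine ⟨(s : (MvPolynomial (Fin 2) k)), s.2, ?_⟩
  rw [mul_comm, this]
  exact a.2

lemma eval_zero_aeval (q : Fin 2 → Polynomial k) (p : (MvPolynomial (Fin 2) k)) :
    Polynomial.eval 0 (aeval q p) = eval (fun i => Polynomial.eval 0 (q i)) p := by
  induction p using MvPolynomial.induction_on with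
  | C a => simp
  | add p r hp hr => simp [hp, hr]
  | mul_X p i hp => simp [hp]

lemma not_X_dvd {σ : (MvPolynomial (Fin 2) k)} (hσ : σ ∉ Ideal.span ({X 0, X 1} : Set (MvPolynomial (Fin 2) k))) (q : Fin 2 → Polynomial k)
    (hq : ∀ i, Polynomial.eval 0 (q i) = 0) :
    ¬ ((Polynomial.X : Polynomial k) ∣ aeval q σ) := by
  rintro ⟨t, ht⟩
  have h0 : Polynomial.eval 0 (aeval q σ) = 0 := by
    rw [ht]; simp
  rw [eval_zero_aeval] at h0
  have : (fun i => Polynomial.eval 0 (q i)) = (fun _ : Fin 2 => (0:k)) := funext hq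
  rw [this] at h0
  have : constantCoeff σ = 0 := by
    rwa [show (fun _ : Fin 2 => (0:k)) = (0 : Fin 2 → k) from rfl, eval_zero] at h0
  exact constantCoeff_ne_zero hσ this

lemma X_dvd_of_dvd_mul_pow {A : Polynomial k} {n : ℕ}
    (h : (Polynomial.X : Polynomial k) ^ (n+1) ∣ A * Polynomial.X ^ n) :
    (Polynomial.X : Polynomial k) ∣ A := by
  rw [pow_succ'] at h
  exact (mul_dvd_mul_iff_right (pow_ne_zero n Polynomial.X_ne_zero)).mp h

lemma mem_span_triple {α : Type*} [CommRing α] {a b c z : α}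
    (h : z ∈ Ideal.span ({a, b, c} : Set α)) :
    ∃ f g h' : α, z = f * a + g * b + h' * c := by
  rw [Ideal.mem_span_insert] at h
  obtain ⟨f, w, hw, rfl⟩ := h
  rw [Ideal.mem_span_pair] at hw
  obtain ⟨g, h', rfl⟩ := hw
  exact ⟨f, g, h', by ring⟩


lemma skel (s : Set (MvPolynomial (Fin 2) k)) (r v : ℕ) (q : Fin 2 → Polynomial k)
    (hq : ∀ i, Polynomial.eval 0 (q i) = 0)
    (heq : (Ideal.map (algebraMap (MvPolynomial (Fin 2) k)
        (Localization.AtPrime (Ideal.span ({X 0, X 1} : Set (MvPolynomial (Fin 2) k)))))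
        (Ideal.span ({X 0 ^ 2, X 0 * X 1, X 1 ^ 3} : Set (MvPolynomial (Fin 2) k)))) ^ (r+1) =
      Ideal.map (algebraMap (MvPolynomial (Fin 2) k)
        (Localization.AtPrime (Ideal.span ({X 0, X 1} : Set (MvPolynomial (Fin 2) k)))))
        (Ideal.span s) *
      (Ideal.map (algebraMap (MvPolynomial (Fin 2) k)
        (Localization.AtPrime (Ideal.span ({X 0, X 1} : Set (MvPolynomial (Fin 2) k)))))
        (Ideal.span ({X 0 ^ 2, X 0 * X 1, X 1 ^ 3} : Set (MvPolynomial (Fin 2) k)))) ^ r)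
    (hIv : ∀ g ∈ ({X 0 ^ 2, X 0 * X 1, X 1 ^ 3} : Set (MvPolynomial (Fin 2) k)),
      (Polynomial.X : Polynomial k) ^ v ∣ aeval q g)
    (hJv : ∀ p ∈ s, (Polynomial.X : Polynomial k) ^ (v+1) ∣ aeval q p)
    (z : MvPolynomial (Fin 2) k)
    (hz : z ∈ (Ideal.span ({X 0 ^ 2, X 0 * X 1, X 1 ^ 3} : Set (MvPolynomial (Fin 2) k))) ^ (r+1))
    (hz2 : aeval q z = (Polynomial.X : Polynomial k) ^ (v*r+v)) : False := by
  have hz1 : algebraMap (MvPolynomial (Fin 2) k)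
      (Localization.AtPrime (Ideal.span ({X 0, X 1} : Set (MvPolynomial (Fin 2) k)))) z ∈
      (Ideal.map (algebraMap (MvPolynomial (Fin 2) k)
        (Localization.AtPrime (Ideal.span ({X 0, X 1} : Set (MvPolynomial (Fin 2) k)))))
        (Ideal.span ({X 0 ^ 2, X 0 * X 1, X 1 ^ 3} : Set (MvPolynomial (Fin 2) k)))) ^ (r+1) := by
    rw [← Ideal.map_pow]
    exact Ideal.mem_map_of_mem _ hz
  rw [heq, ← Ideal.map_pow, ← Ideal.map_mul] at hz1
  obtain ⟨σ, hσ, hσz⟩ := exists_clear _ _ hz1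
  have hmem : aeval q (σ * z) ∈ Ideal.map (aeval q)
      (Ideal.span s * (Ideal.span ({X 0 ^ 2, X 0 * X 1, X 1 ^ 3} :
        Set (MvPolynomial (Fin 2) k))) ^ r) :=
    Ideal.mem_map_of_mem _ hσz
  have h1 : Ideal.map (aeval q) (Ideal.span s) ≤
      Ideal.span {(Polynomial.X : Polynomial k) ^ (v+1)} := by
    rw [Ideal.map_span, Ideal.span_le]
    rintro _ ⟨p, hp, rfl⟩
    exact Ideal.mem_span_singleton.mpr (hJv p hp)
  have h2 : Ideal.map (aeval q) (Ideal.span ({X 0 ^ 2, X 0 * X 1, X 1 ^ 3} :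
      Set (MvPolynomial (Fin 2) k))) ≤ Ideal.span {(Polynomial.X : Polynomial k) ^ v} := by
    rw [Ideal.map_span, Ideal.span_le]
    rintro _ ⟨g, hg, rfl⟩
    exact Ideal.mem_span_singleton.mpr (hIv g hg)
  have hbound : Ideal.map (aeval q)
      (Ideal.span s * (Ideal.span ({X 0 ^ 2, X 0 * X 1, X 1 ^ 3} :
        Set (MvPolynomial (Fin 2) k))) ^ r) ≤
      Ideal.span {(Polynomial.X : Polynomial k) ^ (v*r+v+1)} := by
    rw [Ideal.map_mul, Ideal.map_pow]
    have hkey : Ideal.span {(Polynomial.X : Polynomial k) ^ (v+1)} *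
        (Ideal.span {(Polynomial.X : Polynomial k) ^ v}) ^ r =
        Ideal.span {(Polynomial.X : Polynomial k) ^ (v*r+v+1)} := by
      rw [Ideal.span_singleton_pow, Ideal.span_singleton_mul_span_singleton,
        ← pow_mul, ← pow_add]
      congr 1
      ring
    calc Ideal.map (aeval q) (Ideal.span s) * (Ideal.map (aeval q)
          (Ideal.span ({X 0 ^ 2, X 0 * X 1, X 1 ^ 3} : Set (MvPolynomial (Fin 2) k)))) ^ r
        ≤ Ideal.span {(Polynomial.X : Polynomial k) ^ (v+1)} *
          (Ideal.span {(Polynomial.X : Polynomial k) ^ v}) ^ r :=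
          Ideal.mul_mono h1 (Ideal.pow_right_mono h2 r)
      _ = Ideal.span {(Polynomial.X : Polynomial k) ^ (v*r+v+1)} := hkey
  have hd := Ideal.mem_span_singleton.mp (hbound hmem)
  rw [map_mul, hz2] at hd
  exact not_X_dvd hσ q hq (X_dvd_of_dvd_mul_pow hd)


lemma contra_CXe {σ p : MvPolynomial (Fin 2) k}
    (hσ : σ ∉ Ideal.span ({X 0, X 1} : Set (MvPolynomial (Fin 2) k)))
    (q : Fin 2 → Polynomial k) (hq : ∀ i, Polynomial.eval 0 (q i) = 0)
    {c : k} (hc : c ≠ 0) {e : ℕ}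
    (hA : aeval q p = Polynomial.C c * Polynomial.X ^ e)
    (hB : (Polynomial.X : Polynomial k) ^ (e+1) ∣ aeval q (σ * p)) : False := by
  rw [map_mul, hA, ← mul_assoc] at hB
  have hX := X_dvd_of_dvd_mul_pow hB
  rw [(Polynomial.isUnit_C.mpr (isUnit_iff_ne_zero.mpr hc)).dvd_mul_right] at hX
  exact not_X_dvd hσ q hq hX

lemma homog0_form {p : MvPolynomial (Fin 2) k} (hp : p.IsHomogeneous 0) :
    p = C (coeff (su 0 0) p) := by
  conv_lhs => rw [homog_eq_sum hp]
  simp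

lemma homog1_form {p : MvPolynomial (Fin 2) k} (hp : p.IsHomogeneous 1) :
    p = C (coeff (su 1 0) p) * X 0 + C (coeff (su 0 1) p) * X 1 := by
  conv_lhs => rw [homog_eq_sum hp]
  simp [Finset.sum_range_succ]

lemma homog2_form' {p : MvPolynomial (Fin 2) k} (hp : p.IsHomogeneous 2) :
    p = C (coeff (su 2 0) p) * X 0 ^ 2 + C (coeff (su 1 1) p) * (X 0 * X 1)
      + C (coeff (su 0 2) p) * X 1 ^ 2 := by
  conv_lhs => rw [homog_eq_sum hp]
  simp [Finset.sum_range_succ]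
  ring

lemma homog3_form {p : MvPolynomial (Fin 2) k} (hp : p.IsHomogeneous 3) :
    p = C (coeff (su 3 0) p) * X 0 ^ 3 + C (coeff (su 2 1) p) * (X 0 ^ 2 * X 1)
      + C (coeff (su 1 2) p) * (X 0 * X 1 ^ 2) + C (coeff (su 0 3) p) * X 1 ^ 3 := by
  conv_lhs => rw [homog_eq_sum hp]
  simp [Finset.sum_range_succ]
  ring

section TripleEq

variable {σ p f g h : MvPolynomial (Fin 2) k}
variable (hσ : σ ∉ Ideal.span ({X 0, X 1} : Set (MvPolynomial (Fin 2) k)))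
variable (heq : σ * p = f * X 0 ^ 2 + g * (X 0 * X 1) + h * X 1 ^ 3)

include hσ heq

lemma rhs_image_U : aeval ![(Polynomial.X : Polynomial k), 0] (σ * p)
    = aeval ![(Polynomial.X : Polynomial k), 0] f * Polynomial.X ^ 2 := by
  rw [heq]; simp

lemma rhs_image_V : aeval ![0, (Polynomial.X : Polynomial k)] (σ * p)
    = aeval ![0, (Polynomial.X : Polynomial k)] h * Polynomial.X ^ 3 := by
  rw [heq]; simp

lemma lowdeg_zero {d : ℕ} (hp : p.IsHomogeneous d) (hd : d ≤ 1) : p = 0 := by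
  have hqU : ∀ i, Polynomial.eval (0:k) ((![(Polynomial.X : Polynomial k), 0]) i) = 0 := by
    intro i; fin_cases i <;> simp
  have hqV : ∀ i, Polynomial.eval (0:k) ((![0, (Polynomial.X : Polynomial k)]) i) = 0 := by
    intro i; fin_cases i <;> simp
  interval_cases d
  · by_cases hc : coeff (su 0 0) p = 0
    · rw [homog0_form hp, hc, map_zero]
    · exact (contra_CXe (p := p) hσ _ hqU hc (e := 0)
        (by conv_lhs => rw [homog0_form hp]
            simp [Polynomial.algebraMap_eq])
        (by rw [rhs_image_U hσ heq]; exact ⟨aeval _ f * Polynomial.X, by ring⟩)).elim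
  · have ha : coeff (su 1 0) p = 0 := by
      by_contra hc
      exact contra_CXe (p := p) hσ _ hqU hc (e := 1)
        (by conv_lhs => rw [homog1_form hp]
            simp [Polynomial.algebraMap_eq])
        (by rw [rhs_image_U hσ heq]; exact ⟨aeval _ f, by ring⟩)
    have hb : coeff (su 0 1) p = 0 := by
      by_contra hc
      exact contra_CXe (p := p) hσ _ hqV hc (e := 1)
        (by conv_lhs => rw [homog1_form hp]
            simp [Polynomial.algebraMap_eq])
        (by rw [rhs_image_V hσ heq]; exact ⟨aeval _ h * Polynomial.X, by ring⟩)
    rw [homog1_form hp, ha, hb]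
    simp

lemma deg2_coeffV2_zero (hp : p.IsHomogeneous 2) : coeff (su 0 2) p = 0 := by
  have hqV : ∀ i, Polynomial.eval (0:k) ((![0, (Polynomial.X : Polynomial k)]) i) = 0 := by
    intro i; fin_cases i <;> simp
  by_contra hc
  exact contra_CXe (p := p) hσ _ hqV hc (e := 2)
    (by conv_lhs => rw [homog2_form' hp]
        simp [Polynomial.algebraMap_eq])
    (by rw [rhs_image_V hσ heq]; exact ⟨aeval _ h, by ring⟩)

end TripleEq

lemma homog2_form {p : MvPolynomial (Fin 2) k} (hp : p.IsHomogeneous 2)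
    (he : coeff (su 0 2) p = 0) :
    p = C (coeff (su 2 0) p) * X 0 ^ 2 + C (coeff (su 1 1) p) * (X 0 * X 1) := by
  conv_lhs => rw [homog2_form' hp]
  rw [he]
  simp


set_option maxHeartbeats 1600000 in
theorem main (k : Type*) [Field k] [Infinite k]
    [hP : (Ideal.span {X 0, X 1} : Ideal (MvPolynomial (Fin 2) k)).IsPrime] :
    ¬ ∃ J : Ideal (Localization.AtPrime
        (Ideal.span {X 0, X 1} : Ideal (MvPolynomial (Fin 2) k))),
      Minimal (fun K => K ≤ (Ideal.span {algebraMap (MvPolynomial (Fin 2) k) _ (X 0 ^ 2),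
          algebraMap (MvPolynomial (Fin 2) k) _ (X 0 * X 1),
          algebraMap (MvPolynomial (Fin 2) k) _ (X 1 ^ 3)}) ∧
        ∃ r : ℕ, (Ideal.span {algebraMap (MvPolynomial (Fin 2) k) _ (X 0 ^ 2),
          algebraMap (MvPolynomial (Fin 2) k) _ (X 0 * X 1),
          algebraMap (MvPolynomial (Fin 2) k) _ (X 1 ^ 3)}) ^ (r + 1) =
          K * (Ideal.span {algebraMap (MvPolynomial (Fin 2) k) _ (X 0 ^ 2),
          algebraMap (MvPolynomial (Fin 2) k) _ (X 0 * X 1),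
          algebraMap (MvPolynomial (Fin 2) k) _ (X 1 ^ 3)}) ^ r) J ∧
      ∃ s : Set (MvPolynomial (Fin 2) k),
        (∀ p ∈ s, ∃ d : ℕ, MvPolynomial.IsHomogeneous p d) ∧
        J = Ideal.span (algebraMap (MvPolynomial (Fin 2) k) _ '' s) := by
  rintro ⟨J, hJmin, s, hshom, hJs⟩
  obtain ⟨hJle, r, hJr⟩ := hJmin.1
  set alg := algebraMap (MvPolynomial (Fin 2) k)
    (Localization.AtPrime (Ideal.span {X 0, X 1} : Ideal (MvPolynomial (Fin 2) k))) with halg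
  -- the polynomial-level ideal I₀
  have hImap : (Ideal.span {alg (X 0 ^ 2), alg (X 0 * X 1), alg (X 1 ^ 3)}) =
      Ideal.map alg (Ideal.span ({X 0 ^ 2, X 0 * X 1, X 1 ^ 3} :
        Set (MvPolynomial (Fin 2) k))) := by
    rw [Ideal.map_span]
    congr 1
    simp [Set.image_insert_eq]
  have hJmap : J = Ideal.map alg (Ideal.span s) := by
    rw [hJs, Ideal.map_span]
  have heq : (Ideal.map alg (Ideal.span ({X 0 ^ 2, X 0 * X 1, X 1 ^ 3} :
        Set (MvPolynomial (Fin 2) k)))) ^ (r+1) =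
      Ideal.map alg (Ideal.span s) *
      (Ideal.map alg (Ideal.span ({X 0 ^ 2, X 0 * X 1, X 1 ^ 3} :
        Set (MvPolynomial (Fin 2) k)))) ^ r := by
    rw [← hImap, ← hJmap]
    exact hJr
  -- each element of s has a multiple in I₀
  have hmem : ∀ p ∈ s, ∃ σ, σ ∉ (Ideal.span {X 0, X 1} : Ideal (MvPolynomial (Fin 2) k)) ∧
      ∃ f g h : MvPolynomial (Fin 2) k,
        σ * p = f * X 0 ^ 2 + g * (X 0 * X 1) + h * X 1 ^ 3 := by
    intro p hp
    have h1 : alg p ∈ Ideal.map alg (Ideal.span ({X 0 ^ 2, X 0 * X 1, X 1 ^ 3} :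
        Set (MvPolynomial (Fin 2) k))) := by
      rw [← hImap]
      exact hJle (hJs ▸ Ideal.subset_span (Set.mem_image_of_mem _ hp))
    obtain ⟨σ, hσ, hσp⟩ := exists_clear _ _ h1
    obtain ⟨f, g, h, htrip⟩ := mem_span_triple hσp
    exact ⟨σ, hσ, f, g, h, htrip⟩
  -- ∃ degree-2 element of s with nonzero X0X1-coefficient
  have hD : ∃ p ∈ s, p.IsHomogeneous 2 ∧ coeff (su 1 1) p ≠ 0 := by
    by_contra hno
    push_neg at hno
    apply skel s r 5 ![Polynomial.X ^ 3, Polynomial.X ^ 2] ?hq heq ?hIv ?hJv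
      ((X 0 * X 1) ^ (r+1)) (Ideal.pow_mem_pow (Ideal.subset_span (by simp)) (r+1)) ?hz2
    case hq => refine Fin.forall_fin_two.mpr ⟨?_, ?_⟩ <;> simp
    case hIv =>
      rintro g hg
      simp only [Set.mem_insert_iff, Set.mem_singleton_iff] at hg
      rcases hg with rfl | rfl | rfl
      · refine ⟨Polynomial.X, ?_⟩
        simp only [map_pow, aeval_X, Matrix.cons_val_zero]
        ring
      · refine ⟨1, ?_⟩
        simp only [map_mul, aeval_X, Matrix.cons_val_zero, Matrix.cons_val_one, Matrix.head_cons]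
        ring
      · refine ⟨Polynomial.X, ?_⟩
        simp only [map_pow, aeval_X, Matrix.cons_val_one, Matrix.head_cons, Matrix.cons_val_zero]
        ring
    case hJv =>
      intro p hp
      obtain ⟨d, hd⟩ := hshom p hp
      obtain ⟨σ, hσ, f, g, h, htrip⟩ := hmem p hp
      match d, hd with
      | 0, hd => rw [lowdeg_zero hσ htrip hd (by norm_num)]; simp
      | 1, hd => rw [lowdeg_zero hσ htrip hd (by norm_num)]; simp
      | 2, hd =>
        have he := deg2_coeffV2_zero hσ htrip hd
        have hb := hno p hp hd
        have hform : aeval ![(Polynomial.X : Polynomial k) ^ 3, Polynomial.X ^ 2] p =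
            Polynomial.C (coeff (su 2 0) p) * Polynomial.X ^ 6 := by
          conv_lhs => rw [homog2_form hd he]
          rw [hb, C_0, zero_mul, add_zero]
          simp only [map_mul, map_pow, aeval_C, aeval_X, Matrix.cons_val_zero,
            Polynomial.algebraMap_eq]
          ring
        rw [hform]
        exact ⟨Polynomial.C (coeff (su 2 0) p), by ring⟩
      | (n+3), hd =>
        have hdvd := homog_aeval_dvd hd 2 ![Polynomial.X ^ 3, Polynomial.X ^ 2]
          (Fin.forall_fin_two.mpr
            ⟨by rw [Matrix.cons_val_zero]; exact ⟨Polynomial.X, by ring⟩,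
             by rw [Matrix.cons_val_one, Matrix.cons_val_zero]⟩)
        refine dvd_trans (pow_dvd_pow _ ?_) hdvd
        omega
    case hz2 =>
      rw [map_pow]
      simp only [map_mul, aeval_X, Matrix.cons_val_zero, Matrix.cons_val_one, Matrix.head_cons]
      rw [← pow_add, ← pow_mul]
      congr 1 <;> ring
  -- for every c, ∃ degree-2 element with a + b c ≠ 0
  have hE : ∀ c : k, ∃ p ∈ s, p.IsHomogeneous 2 ∧
      coeff (su 2 0) p + coeff (su 1 1) p * c ≠ 0 := by
    intro c
    by_contra hno
    push_neg at hno
    apply skel s r 2 ![Polynomial.X, Polynomial.C c * Polynomial.X] ?hq heq ?hIv ?hJv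
      ((X 0 ^ 2) ^ (r+1)) (Ideal.pow_mem_pow (Ideal.subset_span (by simp)) (r+1)) ?hz2
    case hq => refine Fin.forall_fin_two.mpr ⟨?_, ?_⟩ <;> simp
    case hIv =>
      rintro g hg
      simp only [Set.mem_insert_iff, Set.mem_singleton_iff] at hg
      rcases hg with rfl | rfl | rfl
      · exact ⟨1, by simp⟩
      · refine ⟨Polynomial.C c, ?_⟩
        simp only [map_mul, aeval_X, Matrix.cons_val_zero, Matrix.cons_val_one, Matrix.head_cons]
        ring
      · refine ⟨Polynomial.C c ^ 3 * Polynomial.X, ?_⟩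
        simp only [map_pow, aeval_X, Matrix.cons_val_one, Matrix.head_cons, Matrix.cons_val_zero]
        ring
    case hJv =>
      intro p hp
      obtain ⟨d, hd⟩ := hshom p hp
      obtain ⟨σ, hσ, f, g, h, htrip⟩ := hmem p hp
      match d, hd with
      | 0, hd => rw [lowdeg_zero hσ htrip hd (by norm_num)]; simp
      | 1, hd => rw [lowdeg_zero hσ htrip hd (by norm_num)]; simp
      | 2, hd =>
        have he := deg2_coeffV2_zero hσ htrip hd
        have hab := hno p hp hd
        have hform : aeval ![(Polynomial.X : Polynomial k), Polynomial.C c * Polynomial.X] p =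
            Polynomial.C (coeff (su 2 0) p + coeff (su 1 1) p * c) * Polynomial.X ^ 2 := by
          conv_lhs => rw [homog2_form hd he]
          simp only [map_add, map_mul, map_pow, aeval_C, aeval_X, Matrix.cons_val_zero,
            Matrix.cons_val_one, Matrix.head_cons, Polynomial.algebraMap_eq]
          ring
        rw [hform, hab]
        simp
      | (n+3), hd =>
        have hdvd := homog_aeval_dvd hd 1 ![Polynomial.X, Polynomial.C c * Polynomial.X]
          (Fin.forall_fin_two.mpr
            ⟨by rw [Matrix.cons_val_zero, pow_one],
             by rw [Matrix.cons_val_one, Matrix.cons_val_zero, pow_one]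
                exact ⟨Polynomial.C c, by ring⟩⟩)
        refine dvd_trans (pow_dvd_pow _ ?_) hdvd
        omega
    case hz2 =>
      rw [map_pow]
      simp only [map_pow, aeval_X, Matrix.cons_val_zero]
      rw [← pow_mul]
      congr 1 <;> ring
  -- ∃ degree-3 element with nonzero X1^3-coefficient
  have hF : ∃ p ∈ s, p.IsHomogeneous 3 ∧ coeff (su 0 3) p ≠ 0 := by
    by_contra hno
    push_neg at hno
    apply skel s r 3 ![0, Polynomial.X] ?hq heq ?hIv ?hJv
      ((X 1 ^ 3) ^ (r+1)) (Ideal.pow_mem_pow (Ideal.subset_span (by simp)) (r+1)) ?hz2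
    case hq => refine Fin.forall_fin_two.mpr ⟨?_, ?_⟩ <;> simp
    case hIv =>
      rintro g hg
      simp only [Set.mem_insert_iff, Set.mem_singleton_iff] at hg
      rcases hg with rfl | rfl | rfl
      · simp
      · simp
      · simp
    case hJv =>
      intro p hp
      obtain ⟨d, hd⟩ := hshom p hp
      obtain ⟨σ, hσ, f, g, h, htrip⟩ := hmem p hp
      match d, hd with
      | 0, hd => rw [lowdeg_zero hσ htrip hd (by norm_num)]; simp
      | 1, hd => rw [lowdeg_zero hσ htrip hd (by norm_num)]; simp
      | 2, hd =>
        have he := deg2_coeffV2_zero hσ htrip hd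
        have hzero : aeval ![(0 : Polynomial k), Polynomial.X] p = 0 := by
          conv_lhs => rw [homog2_form hd he]
          simp
        rw [hzero]
        simp
      | 3, hd =>
        have hc := hno p hp hd
        have hzero : aeval ![(0 : Polynomial k), Polynomial.X] p = 0 := by
          conv_lhs => rw [homog3_form hd]
          rw [hc]
          simp
        rw [hzero]
        simp
      | (n+4), hd =>
        have hdvd := homog_aeval_dvd hd 1 ![0, Polynomial.X]
          (Fin.forall_fin_two.mpr
            ⟨by rw [Matrix.cons_val_zero]; exact dvd_zero _,
             by rw [Matrix.cons_val_one, Matrix.cons_val_zero, pow_one]⟩)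
        refine dvd_trans (pow_dvd_pow _ ?_) hdvd
        omega
    case hz2 =>
      rw [map_pow]
      simp only [map_pow, aeval_X, Matrix.cons_val_one, Matrix.head_cons, Matrix.cons_val_zero]
      rw [← pow_mul]
      congr 1 <;> ring
  -- extract the two degree-2 generators
  obtain ⟨g2, hg2s, hg2hom, hb2⟩ := hD
  obtain ⟨g1, hg1s, hg1hom, h12⟩ := hE (-(coeff (su 2 0) g2) / coeff (su 1 1) g2)
  have he1 : coeff (su 0 2) g1 = 0 := by
    obtain ⟨σ, hσ, f, g, h, htrip⟩ := hmem g1 hg1s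
    exact deg2_coeffV2_zero hσ htrip hg1hom
  have he2 : coeff (su 0 2) g2 = 0 := by
    obtain ⟨σ, hσ, f, g, h, htrip⟩ := hmem g2 hg2s
    exact deg2_coeffV2_zero hσ htrip hg2hom
  have hdet : coeff (su 2 0) g1 * coeff (su 1 1) g2
      - coeff (su 1 1) g1 * coeff (su 2 0) g2 ≠ 0 := by
    have hrw : coeff (su 2 0) g1 * coeff (su 1 1) g2
        - coeff (su 1 1) g1 * coeff (su 2 0) g2 =
        (coeff (su 2 0) g1 + coeff (su 1 1) g1 *
          (-(coeff (su 2 0) g2) / coeff (su 1 1) g2)) * coeff (su 1 1) g2 := by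
      field_simp
      ring
    rw [hrw]
    exact mul_ne_zero h12 hb2
  have hg1J : alg g1 ∈ J := hJs ▸ Ideal.subset_span (Set.mem_image_of_mem _ hg1s)
  have hg2J : alg g2 ∈ J := hJs ▸ Ideal.subset_span (Set.mem_image_of_mem _ hg2s)
  -- X0^2 and X0*X1 belong to J
  have hform1 := homog2_form hg1hom he1
  have hform2 := homog2_form hg2hom he2
  have hkey2 : C (coeff (su 2 0) g1 * coeff (su 1 1) g2
      - coeff (su 1 1) g1 * coeff (su 2 0) g2) * X 0 ^ 2 =
      C (coeff (su 1 1) g2) * g1 - C (coeff (su 1 1) g1) * g2 := by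
    calc C (coeff (su 2 0) g1 * coeff (su 1 1) g2
        - coeff (su 1 1) g1 * coeff (su 2 0) g2) * X 0 ^ 2
        = C (coeff (su 1 1) g2) * (C (coeff (su 2 0) g1) * X 0 ^ 2
            + C (coeff (su 1 1) g1) * (X 0 * X 1))
          - C (coeff (su 1 1) g1) * (C (coeff (su 2 0) g2) * X 0 ^ 2
            + C (coeff (su 1 1) g2) * (X 0 * X 1)) := by
          rw [map_sub, map_mul, map_mul]
          ring
      _ = C (coeff (su 1 1) g2) * g1 - C (coeff (su 1 1) g1) * g2 := by
          rw [← hform1, ← hform2]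
  have hkey11 : C (coeff (su 2 0) g1 * coeff (su 1 1) g2
      - coeff (su 1 1) g1 * coeff (su 2 0) g2) * (X 0 * X 1) =
      C (coeff (su 2 0) g1) * g2 - C (coeff (su 2 0) g2) * g1 := by
    calc C (coeff (su 2 0) g1 * coeff (su 1 1) g2
        - coeff (su 1 1) g1 * coeff (su 2 0) g2) * (X 0 * X 1)
        = C (coeff (su 2 0) g1) * (C (coeff (su 2 0) g2) * X 0 ^ 2
            + C (coeff (su 1 1) g2) * (X 0 * X 1))
          - C (coeff (su 2 0) g2) * (C (coeff (su 2 0) g1) * X 0 ^ 2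
            + C (coeff (su 1 1) g1) * (X 0 * X 1)) := by
          rw [map_sub, map_mul, map_mul]
          ring
      _ = C (coeff (su 2 0) g1) * g2 - C (coeff (su 2 0) g2) * g1 := by
          rw [← hform1, ← hform2]
  have hU2J : alg (X 0 ^ 2) ∈ J := by
    have hrepr : alg (X 0 ^ 2) = alg (C (coeff (su 2 0) g1 * coeff (su 1 1) g2
        - coeff (su 1 1) g1 * coeff (su 2 0) g2)⁻¹) *
        (alg (C (coeff (su 1 1) g2)) * alg g1 - alg (C (coeff (su 1 1) g1)) * alg g2) := by
      rw [← map_mul, ← map_mul, ← map_sub, ← map_mul, ← hkey2, ← mul_assoc, ← map_mul,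
        inv_mul_cancel₀ hdet, map_one, one_mul]
    rw [hrepr]
    exact Ideal.mul_mem_left _ _ (Ideal.sub_mem _ (Ideal.mul_mem_left _ _ hg1J)
      (Ideal.mul_mem_left _ _ hg2J))
  have hUVJ : alg (X 0 * X 1) ∈ J := by
    have hrepr : alg (X 0 * X 1) = alg (C (coeff (su 2 0) g1 * coeff (su 1 1) g2
        - coeff (su 1 1) g1 * coeff (su 2 0) g2)⁻¹) *
        (alg (C (coeff (su 2 0) g1)) * alg g2 - alg (C (coeff (su 2 0) g2)) * alg g1) := by
      rw [← map_mul, ← map_mul, ← map_sub, ← map_mul, ← hkey11, ← mul_assoc, ← map_mul,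
        inv_mul_cancel₀ hdet, map_one, one_mul]
    rw [hrepr]
    exact Ideal.mul_mem_left _ _ (Ideal.sub_mem _ (Ideal.mul_mem_left _ _ hg2J)
      (Ideal.mul_mem_left _ _ hg1J))
  -- X1^3 belongs to J
  obtain ⟨h3, hh3s, hh3hom, hc03⟩ := hF
  have hh3J : alg h3 ∈ J := hJs ▸ Ideal.subset_span (Set.mem_image_of_mem _ hh3s)
  have hform3 := homog3_form hh3hom
  have hkey3 : C (coeff (su 0 3) h3) * X 1 ^ 3 =
      h3 - (C (coeff (su 3 0) h3) * X 0 + C (coeff (su 2 1) h3) * X 1) * X 0 ^ 2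
        - (C (coeff (su 1 2) h3) * X 1) * (X 0 * X 1) := by
    calc C (coeff (su 0 3) h3) * X 1 ^ 3
        = (C (coeff (su 3 0) h3) * X 0 ^ 3 + C (coeff (su 2 1) h3) * (X 0 ^ 2 * X 1)
            + C (coeff (su 1 2) h3) * (X 0 * X 1 ^ 2) + C (coeff (su 0 3) h3) * X 1 ^ 3)
          - (C (coeff (su 3 0) h3) * X 0 + C (coeff (su 2 1) h3) * X 1) * X 0 ^ 2
          - (C (coeff (su 1 2) h3) * X 1) * (X 0 * X 1) := by ring
      _ = h3 - (C (coeff (su 3 0) h3) * X 0 + C (coeff (su 2 1) h3) * X 1) * X 0 ^ 2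
          - (C (coeff (su 1 2) h3) * X 1) * (X 0 * X 1) := by rw [← hform3]
  have hV3J : alg (X 1 ^ 3) ∈ J := by
    have hrepr : alg (X 1 ^ 3) = alg (C (coeff (su 0 3) h3)⁻¹) *
        (alg h3 - alg (C (coeff (su 3 0) h3) * X 0 + C (coeff (su 2 1) h3) * X 1) * alg (X 0 ^ 2)
          - alg (C (coeff (su 1 2) h3) * X 1) * alg (X 0 * X 1)) := by
      rw [← map_mul, ← map_mul, ← map_sub, ← map_sub, ← hkey3, ← map_mul, ← mul_assoc,
        ← map_mul, inv_mul_cancel₀ hc03, map_one, one_mul]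
    rw [hrepr]
    exact Ideal.mul_mem_left _ _ (Ideal.sub_mem _ (Ideal.sub_mem _ hh3J
      (Ideal.mul_mem_left _ _ hU2J)) (Ideal.mul_mem_left _ _ hUVJ))
  -- hence J = I
  have hJI : J = Ideal.span {alg (X 0 ^ 2), alg (X 0 * X 1), alg (X 1 ^ 3)} := by
    refine le_antisymm hJle ?_
    rw [Ideal.span_le]
    rintro x hx
    simp only [Set.mem_insert_iff, Set.mem_singleton_iff] at hx
    rcases hx with rfl | rfl | rfl
    · exact hU2J
    · exact hUVJ
    · exact hV3J
  -- the competing reduction K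
  have hKle : Ideal.span {alg (X 0 * X 1), alg (X 0 ^ 2 + X 1 ^ 3)} ≤
      Ideal.span {alg (X 0 ^ 2), alg (X 0 * X 1), alg (X 1 ^ 3)} := by
    rw [Ideal.span_le]
    rintro x hx
    simp only [Set.mem_insert_iff, Set.mem_singleton_iff] at hx
    rcases hx with rfl | rfl
    · exact Ideal.subset_span (by simp)
    · rw [map_add]
      exact Ideal.add_mem _ (Ideal.subset_span (by simp)) (Ideal.subset_span (by simp))
  have hIsup : Ideal.span {alg (X 0 ^ 2), alg (X 0 * X 1), alg (X 1 ^ 3)} =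
      Ideal.span {alg (X 0 * X 1), alg (X 0 ^ 2 + X 1 ^ 3)} ⊔ Ideal.span {alg (X 1 ^ 3)} := by
    refine le_antisymm ?_ ?_
    · rw [Ideal.span_le]
      rintro x hx
      simp only [Set.mem_insert_iff, Set.mem_singleton_iff] at hx
      rcases hx with rfl | rfl | rfl
      · have : alg (X 0 ^ 2) = alg (X 0 ^ 2 + X 1 ^ 3) - alg (X 1 ^ 3) := by
          rw [map_add]; ring
        rw [this]
        exact Ideal.sub_mem _ (Ideal.mem_sup_left (Ideal.subset_span (by simp)))
          (Ideal.mem_sup_right (Ideal.subset_span (by simp)))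
      · exact Ideal.mem_sup_left (Ideal.subset_span (by simp))
      · exact Ideal.mem_sup_right (Ideal.subset_span (by simp))
    · exact sup_le hKle (by
        rw [Ideal.span_le]
        rintro x hx
        simp only [Set.mem_singleton_iff] at hx
        subst hx
        exact Ideal.subset_span (by simp))
  have hUV2I : alg (X 0 * X 1 ^ 2) ∈
      Ideal.span {alg (X 0 ^ 2), alg (X 0 * X 1), alg (X 1 ^ 3)} := by
    have : alg (X 0 * X 1 ^ 2) = alg (X 0 * X 1) * alg (X 1) := by
      rw [← map_mul]; congr 1; ring
    rw [this]
    exact Ideal.mul_mem_right _ _ (Ideal.subset_span (by simp))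
  have hsq : Ideal.span {alg (X 0 ^ 2), alg (X 0 * X 1), alg (X 1 ^ 3)} ^ (1+1) =
      Ideal.span {alg (X 0 * X 1), alg (X 0 ^ 2 + X 1 ^ 3)} *
      Ideal.span {alg (X 0 ^ 2), alg (X 0 * X 1), alg (X 1 ^ 3)} ^ 1 := by
    rw [pow_one, show (1+1) = 2 from rfl, pow_two]
    refine le_antisymm ?_ (Ideal.mul_mono hKle le_rfl)
    nth_rewrite 1 [hIsup]
    rw [Ideal.sup_mul]
    refine sup_le le_rfl ?_
    rw [Ideal.span_singleton_mul_le_iff]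
    intro z hz
    obtain ⟨f, g, h, rfl⟩ := mem_span_triple hz
    have hin1 : alg (X 1 ^ 3) * alg (X 0 ^ 2) =
        alg (X 0 * X 1) * alg (X 0 * X 1 ^ 2) := by
      rw [← map_mul, ← map_mul]
      congr 1
      ring
    have ht1 : alg (X 1 ^ 3) * (f * alg (X 0 ^ 2)) =
        f * (alg (X 0 * X 1) * alg (X 0 * X 1 ^ 2)) := by
      rw [← hin1]
      ring
    have ht2 : alg (X 1 ^ 3) * (g * alg (X 0 * X 1)) =
        g * (alg (X 0 * X 1) * alg (X 1 ^ 3)) := by ring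
    have hin3 : alg (X 1 ^ 3) * alg (X 1 ^ 3) =
        alg (X 0 ^ 2 + X 1 ^ 3) * alg (X 1 ^ 3) - alg (X 0 * X 1) * alg (X 0 * X 1 ^ 2) := by
      rw [← map_mul, ← map_mul, ← map_mul, ← map_sub]
      congr 1
      ring
    have ht3 : alg (X 1 ^ 3) * (h * alg (X 1 ^ 3)) =
        h * (alg (X 0 ^ 2 + X 1 ^ 3) * alg (X 1 ^ 3)
          - alg (X 0 * X 1) * alg (X 0 * X 1 ^ 2)) := by
      rw [← hin3]
      ring
    rw [mul_add, mul_add, ht1, ht2, ht3]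
    refine Ideal.add_mem _ (Ideal.add_mem _ ?_ ?_) ?_
    · exact Ideal.mul_mem_left _ _ (Ideal.mul_mem_mul (Ideal.subset_span (by simp)) hUV2I)
    · exact Ideal.mul_mem_left _ _ (Ideal.mul_mem_mul (Ideal.subset_span (by simp))
        (Ideal.subset_span (by simp)))
    · exact Ideal.mul_mem_left _ _ (Ideal.sub_mem _
        (Ideal.mul_mem_mul (Ideal.subset_span (by simp)) (Ideal.subset_span (by simp)))
        (Ideal.mul_mem_mul (Ideal.subset_span (by simp)) hUV2I))
  have hKred : Ideal.span {alg (X 0 * X 1), alg (X 0 ^ 2 + X 1 ^ 3)} ≤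
        Ideal.span {alg (X 0 ^ 2), alg (X 0 * X 1), alg (X 1 ^ 3)} ∧
      ∃ r : ℕ, (Ideal.span {alg (X 0 ^ 2), alg (X 0 * X 1), alg (X 1 ^ 3)}) ^ (r + 1) =
        Ideal.span {alg (X 0 * X 1), alg (X 0 ^ 2 + X 1 ^ 3)} *
        (Ideal.span {alg (X 0 ^ 2), alg (X 0 * X 1), alg (X 1 ^ 3)}) ^ r := ⟨hKle, 1, hsq⟩
  have hJK : J ≤ Ideal.span {alg (X 0 * X 1), alg (X 0 ^ 2 + X 1 ^ 3)} :=
    hJmin.2 hKred (le_of_le_of_eq hKle hJI.symm)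
  -- derive the contradiction : X1^3 cannot be in K
  have hV3K : alg (X 1 ^ 3) ∈ Ideal.map alg (Ideal.span ({X 0 * X 1, X 0 ^ 2 + X 1 ^ 3} :
      Set (MvPolynomial (Fin 2) k))) := by
    have : Ideal.span {alg (X 0 * X 1), alg (X 0 ^ 2 + X 1 ^ 3)} =
        Ideal.map alg (Ideal.span ({X 0 * X 1, X 0 ^ 2 + X 1 ^ 3} :
          Set (MvPolynomial (Fin 2) k))) := by
      rw [Ideal.map_span]
      congr 1
      simp [Set.image_insert_eq]
    exact this ▸ hJK hV3J
  obtain ⟨σ, hσ, hσv⟩ := exists_clear _ _ hV3K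
  obtain ⟨f, g, hfg⟩ := Ideal.mem_span_pair.mp hσv
  have h1 := congrArg (aeval ![(0 : Polynomial k), Polynomial.X]) hfg
  simp only [map_add, map_mul, map_pow, aeval_X, Matrix.cons_val_zero, Matrix.cons_val_one,
    Matrix.head_cons, mul_zero, zero_mul, zero_add, add_zero,
    zero_pow, ne_eq, OfNat.ofNat_ne_zero, not_false_eq_true] at h1
  have hgσ : aeval ![(0 : Polynomial k), Polynomial.X] g =
      aeval ![(0 : Polynomial k), Polynomial.X] σ :=
    mul_right_cancel₀ (pow_ne_zero 3 Polynomial.X_ne_zero) h1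
  have h2 := congrArg (aeval ![Polynomial.X, (0 : Polynomial k)]) hfg
  simp only [map_add, map_mul, map_pow, aeval_X, Matrix.cons_val_zero, Matrix.cons_val_one,
    Matrix.head_cons, mul_zero, zero_mul, zero_add, add_zero,
    zero_pow, ne_eq, OfNat.ofNat_ne_zero, not_false_eq_true] at h2
  have hg0 : aeval ![Polynomial.X, (0 : Polynomial k)] g = 0 := by
    rcases mul_eq_zero.mp h2 with h | h
    · exact h
    · exact absurd h (pow_ne_zero 2 Polynomial.X_ne_zero)
  have hcc1 : constantCoeff g = constantCoeff σ := by
    have e1 := eval_zero_aeval ![(0 : Polynomial k), Polynomial.X] g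
    have e2 := eval_zero_aeval ![(0 : Polynomial k), Polynomial.X] σ
    have hfn : (fun i => Polynomial.eval (0:k) ((![(0 : Polynomial k), Polynomial.X]) i)) =
        (0 : Fin 2 → k) := by
      funext i; fin_cases i <;> simp
    rw [hfn, eval_zero] at e1 e2
    rw [← e1, ← e2, hgσ]
  have hcc0 : constantCoeff g = 0 := by
    have e1 := eval_zero_aeval ![Polynomial.X, (0 : Polynomial k)] g
    have hfn : (fun i => Polynomial.eval (0:k) ((![Polynomial.X, (0 : Polynomial k)]) i)) =
        (0 : Fin 2 → k) := by
      funext i; fin_cases i <;> simp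
    rw [hfn, eval_zero] at e1
    rw [← e1, hg0, Polynomial.eval_zero]
  exact constantCoeff_ne_zero hσ (hcc1 ▸ hcc0)

end Stmt10Aux



open IsLocalRing Polynomial

/-- For `I = (U², UV, V³)` in `k[U,V]_{(U,V)}`, no minimal reduction of `I` is generated
by polynomials homogeneous in `U` and `V`. -/
theorem stmt10 (k : Type*) [Field k] [Infinite k]
    [hP : (Ideal.span {MvPolynomial.X 0, MvPolynomial.X 1} :
        Ideal (MvPolynomial (Fin 2) k)).IsPrime] :
    ¬ ∃ J : Ideal (Localization.AtPrime
        (Ideal.span {MvPolynomial.X 0, MvPolynomial.X 1} : Ideal (MvPolynomial (Fin 2) k))),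
      Minimal (IsReduction _
        (Ideal.span {algebraMap (MvPolynomial (Fin 2) k) _ (MvPolynomial.X 0 ^ 2),
          algebraMap (MvPolynomial (Fin 2) k) _ (MvPolynomial.X 0 * MvPolynomial.X 1),
          algebraMap (MvPolynomial (Fin 2) k) _ (MvPolynomial.X 1 ^ 3)})) J ∧
      ∃ s : Set (MvPolynomial (Fin 2) k),
        (∀ p ∈ s, ∃ d : ℕ, MvPolynomial.IsHomogeneous p d) ∧
        J = Ideal.span (algebraMap (MvPolynomial (Fin 2) k) _ '' s) :=
  Stmt10Aux.main k
end

section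
/- Let R → R' be a flat local homomorphism of Noetherian local rings with infinite residue fields, and I an R-ideal such that core(I) is a finite intersection of reductions J₁,...,J_s of I. Then (core(I))·R' ⊇ core(I·R'); i.e., core(IR') ⊆ (core(I))R'. -/
open IsLocalRing Polynomial

/-! Each `J i` extends to a reduction of `I R'`, so `core(I R') ⊆ ⋂ (J i) R'`. Flatness of `R'`
makes extension commute with finite intersections: `J₁ ⊓ J₂` is the kernel of
`R → R/J₁ × R/J₂`, tensoring with `R'` preserves that kernel, and `J R'` is the image of
`J ⊗ R'` in `R ⊗ R' = R'`. -/

section FlatIntersection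

open TensorProduct LinearMap

variable {R A : Type*} [CommRing R] [CommRing A] [Algebra R A]

theorem LinearMap.ker_rTensor_prod {M N P : Type*} (Q : Type*) [AddCommGroup M]
    [AddCommGroup N] [AddCommGroup P] [AddCommGroup Q] [Module R M] [Module R N] [Module R P]
    [Module R Q] (f : M →ₗ[R] N) (g : M →ₗ[R] P) :
    ker ((f.prod g).rTensor Q) = ker (f.rTensor Q) ⊓ ker (g.rTensor Q) := by
  have h : (prodLeft R R N P Q).toLinearMap ∘ₗ (f.prod g).rTensor Q =
      (f.rTensor Q).prod (g.rTensor Q) := by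
    ext <;> simp
  rw [← ker_prod, ← h, LinearEquiv.ker_comp]

theorem Ideal.restrictScalars_map_eq_map_range_rTensor (J : Ideal R) :
    (J.map (algebraMap R A)).restrictScalars R =
      (range (J.subtype.rTensor A)).map (TensorProduct.lid R A).toLinearMap := by
  rw [← Ideal.smul_top_eq_map, ← Ideal.subtype_rTensor_range, range_comp]

theorem Ideal.range_rTensor_subtype_eq_ker (J : Ideal R) :
    range (J.subtype.rTensor A) = ker (J.mkQ.rTensor A) :=
  (exact_iff.mp (rTensor_exact A (exact_subtype_mkQ J) J.mkQ_surjective)).symm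

theorem Ideal.map_inf_of_flat [Module.Flat R A] (J₁ J₂ : Ideal R) :
    (J₁ ⊓ J₂).map (algebraMap R A) =
      J₁.map (algebraMap R A) ⊓ J₂.map (algebraMap R A) := by
  have hker : ker (J₁.mkQ.prod J₂.mkQ) = J₁ ⊓ J₂ := by
    rw [ker_prod, Submodule.ker_mkQ, Submodule.ker_mkQ]
  have hexact := Module.Flat.rTensor_exact A (exact_subtype_ker_map (J₁.mkQ.prod J₂.mkQ))
  rw [hker] at hexact
  have hrange : range ((J₁ ⊓ J₂).subtype.rTensor A) =
      range (J₁.subtype.rTensor A) ⊓ range (J₂.subtype.rTensor A) := by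
    rw [← exact_iff.mp hexact, ker_rTensor_prod, range_rTensor_subtype_eq_ker,
      range_rTensor_subtype_eq_ker]
  apply Submodule.restrictScalars_injective R
  rw [Submodule.restrictScalars_inf, restrictScalars_map_eq_map_range_rTensor,
    restrictScalars_map_eq_map_range_rTensor, restrictScalars_map_eq_map_range_rTensor, hrange,
    Submodule.map_inf _ (TensorProduct.lid R A).injective]

theorem Ideal.map_iInf_of_flat [Module.Flat R A] {ι : Type*} [Finite ι] (J : ι → Ideal R) :
    (⨅ i, J i).map (algebraMap R A) = ⨅ i, (J i).map (algebraMap R A) := by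
  have := Fintype.ofFinite ι
  rw [← Finset.inf_univ_eq_iInf, ← Finset.inf_univ_eq_iInf]
  exact Finset.apply_inf_eq_inf_comp _ Ideal.map_inf_of_flat (Ideal.map_top _)

end FlatIntersection

theorem IsReduction.map {R S : Type*} [CommRing R] [CommRing S] (f : R →+* S) {I J : Ideal R}
    (h : IsReduction R I J) : IsReduction S (I.map f) (J.map f) := by
  obtain ⟨hle, r, hr⟩ := h
  exact ⟨Ideal.map_mono hle, r, by rw [← Ideal.map_pow, hr, Ideal.map_mul, Ideal.map_pow]⟩

theorem coreIdeal_map_le_iInf_map {R S ι : Type*} [CommRing R] [CommRing S] (f : R →+* S)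
    {I : Ideal R} {J : ι → Ideal R} (hJ : ∀ i, IsReduction R I (J i)) :
    coreIdeal S (I.map f) ≤ ⨅ i, (J i).map f :=
  le_iInf fun i => sInf_le ((hJ i).map f)

theorem stmt13_general {R R' : Type*} [CommRing R] [CommRing R'] [Algebra R R']
    [Module.Flat R R']
    (I : Ideal R) (s : ℕ) (J : Fin s → Ideal R)
    (hJ : ∀ i, IsReduction R I (J i)) (hcore : coreIdeal R I = ⨅ i, J i) :
    coreIdeal R' (I.map (algebraMap R R')) ≤ (coreIdeal R I).map (algebraMap R R') := by
  rw [hcore, Ideal.map_iInf_of_flat]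
  exact coreIdeal_map_le_iInf_map _ hJ

/-- If `R → R'` is a flat local map and `core(I)` is a finite intersection of reductions
of `I`, then `core(IR') ⊆ (core(I))R'`. -/
theorem stmt13 {R R' : Type*} [CommRing R] [CommRing R'] [IsNoetherianRing R]
    [IsNoetherianRing R'] [IsLocalRing R] [IsLocalRing R'] [Algebra R R']
    [Module.Flat R R'] [IsLocalHom (algebraMap R R')]
    [Infinite (ResidueField R)] [Infinite (ResidueField R')]
    (I : Ideal R) (s : ℕ) (J : Fin s → Ideal R)
    (hJ : ∀ i, IsReduction R I (J i)) (hcore : coreIdeal R I = ⨅ i, J i) :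
    coreIdeal R' (I.map (algebraMap R R')) ≤ (coreIdeal R I).map (algebraMap R R') :=
  stmt13_general I s J hJ hcore
end
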